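/- arXiv:2409.12498 — 11 statements merged into one kernel-verified Lean document; each statement's English description precedes it below -/
import Mathlib

section
/- Let p be a design on N ≥ 2 units satisfying positivity, and let Q be a symmetric positive semidefinite N×N real matrix with entries q_{ii'} such that q_{ii} = 1/N² for every i and Σ_{i'=1}^N q_{ii'} = 0 for every i. Writing p_{ii'}(u,v) = Pr(W_i = u, W_{i'} = v) for i ≠ i' and u,v ∈ {0,1}, define Ṽ(Q) = (1/N²)·[Σ_i Y_i(1)²/π_i + Σ_i Y_i(0)²/(1−π_i)] + 2·Σ_{i<i'}[Y_i(1)·Y_{i'}(1)·(p_{ii'}(1,1)/(N²·π_i·π_{i'}) + q_{ii'} − 1/N²) + Y_i(0)·Y_{i'}(0)·(p_{ii'}(0,0)/(N²·(1−π_i)·(1−π_{i'})) + q_{ii'} − 1/N²)] − 2·Σ_{i<i'}[Y_i(1)·Y_{i'}(0)·(p_{ii'}(1,0)/(N²·π_i·(1−π_{i'})) + q_{ii'} − 1/N²) + Y_i(0)·Y_{i'}(1)·(p_{ii'}(0,1)/(N²·(1−π_i)·π_{i'}) + q_{ii'} − 1/N²)]. Then Var(τ̂) = Ṽ(Q) −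 (Y(1) − Y(0))ᵀ·Q·(Y(1) − Y(0)), where Y(1) − Y(0) ∈ ℝ^N is the vector with coordinates Y_i(1) − Y_i(0). -/
open Finset Matrix

noncomputable section

/-- Propensity score `π_i = Pr(W_i = 1)` of a design `p` on `N` units. -/
def piS (N : ℕ) (p : (Fin N → Bool) → ℝ) (i : Fin N) : ℝ :=
  ∑ w : Fin N → Bool, if w i then p w else 0

/-- Joint assignment probability `p_{ii'}(u,v) = Pr(W_i = u, W_{i'} = v)`. -/
def jointP (N : ℕ) (p : (Fin N → Bool) → ℝ) (i i' : Fin N) (u v : Bool) : ℝ :=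
  ∑ w : Fin N → Bool, if w i = u ∧ w i' = v then p w else 0

/-- Expectation under the design. -/
def expct (N : ℕ) (p f : (Fin N → Bool) → ℝ) : ℝ :=
  ∑ w : Fin N → Bool, p w * f w

/-- Average treatment effect. -/
def tauATE (N : ℕ) (Y1 Y0 : Fin N → ℝ) : ℝ :=
  (1 / (N : ℝ)) * ∑ i, (Y1 i - Y0 i)

/-- Horvitz–Thompson estimator. -/
def tauHT (N : ℕ) (p : (Fin N → Bool) → ℝ) (Y1 Y0 : Fin N → ℝ) (w : Fin N → Bool) : ℝ :=
  (1 / (N : ℝ)) * (∑ i, if w i then Y1 i / piS N p i else 0)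
    - (1 / (N : ℝ)) * (∑ i, if w i then 0 else Y0 i / (1 - piS N p i))

/-- Design-based variance of the Horvitz–Thompson estimator. -/
def varHT (N : ℕ) (p : (Fin N → Bool) → ℝ) (Y1 Y0 : Fin N → ℝ) : ℝ :=
  expct N p (fun w => (tauHT N p Y1 Y0 w - tauATE N Y1 Y0) ^ 2)

section Aux
variable {N : ℕ} (p : (Fin N → Bool) → ℝ)

lemma aux_L1 (hsum : ∑ w : Fin N → Bool, p w = 1) (i : Fin N) (c d : ℝ) :
    ∑ w : Fin N → Bool, p w * (if w i then c else d)
      = piS N p i * c + (1 - piS N p i) * d := by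
  have h0 : (1 - piS N p i) = ∑ w : Fin N → Bool, (if w i then 0 else p w) := by
    rw [← hsum]; unfold piS
    rw [← Finset.sum_sub_distrib]
    exact Finset.sum_congr rfl fun w _ => by by_cases h : w i <;> simp [h]
  rw [h0]
  unfold piS
  rw [Finset.sum_mul, Finset.sum_mul, ← Finset.sum_add_distrib]
  exact Finset.sum_congr rfl fun w _ => by by_cases h : w i <;> simp [h, mul_comm]

lemma aux_L2 (i j : Fin N) (c1 c0 d1 d0 : ℝ) :
    ∑ w : Fin N → Bool, p w * ((if w i then c1 else c0) * (if w j then d1 else d0))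
      = jointP N p i j true true * (c1 * d1) + jointP N p i j true false * (c1 * d0)
        + jointP N p i j false true * (c0 * d1)
        + jointP N p i j false false * (c0 * d0) := by
  unfold jointP
  simp only [Finset.sum_mul]
  rw [← Finset.sum_add_distrib, ← Finset.sum_add_distrib, ← Finset.sum_add_distrib]
  exact Finset.sum_congr rfl fun w _ => by
    by_cases h : w i <;> by_cases h' : w j <;> simp [h, h'] <;> ring

lemma jointP_symm (i j : Fin N) (u v : Bool) :
    jointP N p i j u v = jointP N p j i v u := by
  unfold jointP
  exact Finset.sum_congr rfl fun w _ => if_congr and_comm rfl rfl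

lemma jointP_tt (i : Fin N) : jointP N p i i true true = piS N p i := by
  unfold jointP piS
  exact Finset.sum_congr rfl fun w _ => by by_cases h : w i <;> simp [h]

lemma jointP_ff (hsum : ∑ w : Fin N → Bool, p w = 1) (i : Fin N) :
    jointP N p i i false false = 1 - piS N p i := by
  unfold jointP piS
  rw [← hsum, ← Finset.sum_sub_distrib]
  exact Finset.sum_congr rfl fun w _ => by by_cases h : w i <;> simp [h]

lemma jointP_tf (i : Fin N) : jointP N p i i true false = 0 :=
  Finset.sum_eq_zero fun w _ => by by_cases h : w i <;> simp [h]

lemma jointP_ft (i : Fin N) : jointP N p i i false true = 0 :=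
  Finset.sum_eq_zero fun w _ => by by_cases h : w i <;> simp [h]

lemma pair_split (f : Fin N → Fin N → ℝ) :
    ∑ i, ∑ j, f i j
      = (∑ i, f i i) + ∑ i, ∑ j, (if i < j then f i j + f j i else 0) := by
  have h1 : ∀ i j : Fin N, f i j
      = (if i = j then f i j else 0) + (if i < j then f i j else 0)
        + (if j < i then f i j else 0) := by
    intro i j
    rcases lt_trichotomy i j with h | h | h
    · simp [h, h.ne, lt_asymm h]
    · subst h; simp
    · simp [h, h.ne', lt_asymm h]
  calc ∑ i, ∑ j, f i j
      = ∑ i, ∑ j, ((if i = j then f i j else 0) + (if i < j then f i j else 0)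
          + (if j < i then f i j else 0)) :=
        Finset.sum_congr rfl fun i _ => Finset.sum_congr rfl fun j _ => h1 i j
    _ = (∑ i, ∑ j, (if i = j then f i j else 0))
        + (∑ i, ∑ j, (if i < j then f i j else 0))
        + ∑ i, ∑ j, (if j < i then f i j else 0) := by
        simp [Finset.sum_add_distrib]
    _ = (∑ i, f i i)
        + ((∑ i, ∑ j, (if i < j then f i j else 0))
        + ∑ i, ∑ j, (if i < j then f j i else 0)) := by
        rw [Finset.sum_comm (f := fun i j => if j < i then f i j else 0)]
        simp only [Finset.sum_ite_eq, Finset.mem_univ, if_true]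
        ring
    _ = (∑ i, f i i) + ∑ i, ∑ j, (if i < j then f i j + f j i else 0) := by
        rw [← Finset.sum_add_distrib]
        congr 1
        refine Finset.sum_congr rfl fun i _ => ?_
        rw [← Finset.sum_add_distrib]
        exact Finset.sum_congr rfl fun j _ => by split_ifs <;> simp

lemma pairsum_congr (f g : Fin N → Fin N → ℝ) (h : ∀ i j, i < j → f i j = g i j) :
    ∑ i, ∑ j, (if i < j then f i j else 0) = ∑ i, ∑ j, (if i < j then g i j else 0) :=
  Finset.sum_congr rfl fun i _ => Finset.sum_congr rfl fun j _ => by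
    split_ifs with hij
    · exact h i j hij
    · rfl

lemma pairsum_smul (k : ℝ) (f : Fin N → Fin N → ℝ) :
    ∑ i, ∑ j, (if i < j then k * f i j else 0)
      = k * ∑ i, ∑ j, (if i < j then f i j else 0) := by
  rw [Finset.mul_sum]
  refine Finset.sum_congr rfl fun i _ => ?_
  rw [Finset.mul_sum]
  exact Finset.sum_congr rfl fun j _ => by split_ifs <;> simp

lemma pairsum_add (f g : Fin N → Fin N → ℝ) :
    ∑ i, ∑ j, (if i < j then f i j + g i j else 0)
      = (∑ i, ∑ j, (if i < j then f i j else 0))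
        + ∑ i, ∑ j, (if i < j then g i j else 0) := by
  rw [← Finset.sum_add_distrib]
  refine Finset.sum_congr rfl fun i _ => ?_
  rw [← Finset.sum_add_distrib]
  exact Finset.sum_congr rfl fun j _ => by split_ifs <;> simp

end Aux

/-- Summand of the HT estimator. -/
def auxA (N : ℕ) (p : (Fin N → Bool) → ℝ) (Y1 Y0 : Fin N → ℝ) (i : Fin N)
    (w : Fin N → Bool) : ℝ :=
  if w i then Y1 i / piS N p i else -(Y0 i / (1 - piS N p i))

/-- Second mixed moment `E[a_i a_j]` in closed form. -/
def auxG (N : ℕ) (p : (Fin N → Bool) → ℝ) (Y1 Y0 : Fin N → ℝ) (i j : Fin N) : ℝ :=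
  jointP N p i j true true * (Y1 i / piS N p i * (Y1 j / piS N p j))
  + jointP N p i j true false * (Y1 i / piS N p i * -(Y0 j / (1 - piS N p j)))
  + jointP N p i j false true * (-(Y0 i / (1 - piS N p i)) * (Y1 j / piS N p j))
  + jointP N p i j false false
      * (-(Y0 i / (1 - piS N p i)) * -(Y0 j / (1 - piS N p j)))

set_option maxHeartbeats 2000000 in
/-- Proposition 1 (general Neymanian decomposition): for any symmetric PSD matrix `Q` with
diagonal `1/N²` and zero row sums, `Var(τ̂) = Ṽ(Q) − (Y(1)−Y(0))ᵀ Q (Y(1)−Y(0))`. -/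
theorem neymanian_decomposition_general
    (N : ℕ) (hN : 2 ≤ N)
    (p : (Fin N → Bool) → ℝ) (hp : ∀ w, 0 ≤ p w)
    (hsum : ∑ w : Fin N → Bool, p w = 1)
    (hpos : ∀ i, 0 < piS N p i ∧ piS N p i < 1)
    (Y1 Y0 : Fin N → ℝ)
    (Q : Matrix (Fin N) (Fin N) ℝ)
    (hQ : Q.PosSemidef)
    (hdiag : ∀ i, Q i i = 1 / (N : ℝ) ^ 2)
    (hrow : ∀ i, ∑ j, Q i j = 0) :
    varHT N p Y1 Y0 =
      ((1 / (N : ℝ) ^ 2) *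
          ((∑ i, (Y1 i) ^ 2 / piS N p i) + ∑ i, (Y0 i) ^ 2 / (1 - piS N p i))
        + 2 * ∑ i, ∑ j, (if i < j then
            Y1 i * Y1 j *
              (jointP N p i j true true / ((N : ℝ) ^ 2 * piS N p i * piS N p j)
                + Q i j - 1 / (N : ℝ) ^ 2)
            + Y0 i * Y0 j *
              (jointP N p i j false false / ((N : ℝ) ^ 2 * (1 - piS N p i) * (1 - piS N p j))
                + Q i j - 1 / (N : ℝ) ^ 2)
          else 0)
        - 2 * ∑ i, ∑ j, (if i < j then
            Y1 i * Y0 j *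
              (jointP N p i j true false / ((N : ℝ) ^ 2 * piS N p i * (1 - piS N p j))
                + Q i j - 1 / (N : ℝ) ^ 2)
            + Y0 i * Y1 j *
              (jointP N p i j false true / ((N : ℝ) ^ 2 * (1 - piS N p i) * piS N p j)
                + Q i j - 1 / (N : ℝ) ^ 2)
          else 0))
      - (fun i => Y1 i - Y0 i) ⬝ᵥ Q.mulVec (fun i => Y1 i - Y0 i) := by
  have hN0 : (N : ℝ) ≠ 0 := Nat.cast_ne_zero.2 (by omega)
  have hπ0 : ∀ i, piS N p i ≠ 0 := fun i => ne_of_gt (hpos i).1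
  have hπ1 : ∀ i, (1 : ℝ) - piS N p i ≠ 0 := fun i => sub_ne_zero.2 (hpos i).2.ne'
  -- τ̂ as an average of auxA
  have htauHT : ∀ w, tauHT N p Y1 Y0 w = (1 / (N : ℝ)) * ∑ i, auxA N p Y1 Y0 i w := by
    intro w
    unfold tauHT auxA
    rw [← mul_sub, ← Finset.sum_sub_distrib]
    congr 1
    exact Finset.sum_congr rfl fun i _ => by by_cases h : w i <;> simp [h]
  -- unbiasedness
  have ha_exp : ∀ i, ∑ w : Fin N → Bool, p w * auxA N p Y1 Y0 i w = Y1 i - Y0 i := by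
    intro i
    unfold auxA
    rw [aux_L1 p hsum i (Y1 i / piS N p i) (-(Y0 i / (1 - piS N p i)))]
    field_simp [hπ0 i, hπ1 i]
    ring
  have hunb : expct N p (tauHT N p Y1 Y0) = tauATE N Y1 Y0 := by
    unfold expct tauATE
    calc ∑ w : Fin N → Bool, p w * tauHT N p Y1 Y0 w
        = ∑ w : Fin N → Bool, (1 / (N : ℝ)) * ∑ i, p w * auxA N p Y1 Y0 i w := by
          refine Finset.sum_congr rfl fun w _ => ?_
          rw [htauHT w, Finset.mul_sum, Finset.mul_sum, Finset.mul_sum]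
          exact Finset.sum_congr rfl fun i _ => by ring
      _ = (1 / (N : ℝ)) * ∑ i, ∑ w : Fin N → Bool, p w * auxA N p Y1 Y0 i w := by
          rw [← Finset.mul_sum, Finset.sum_comm]
      _ = (1 / (N : ℝ)) * ∑ i, (Y1 i - Y0 i) := by
          rw [Finset.sum_congr rfl fun i _ => ha_exp i]
  -- variance = second moment - square of mean
  have hvar : varHT N p Y1 Y0
      = (∑ w : Fin N → Bool, p w * tauHT N p Y1 Y0 w ^ 2) - tauATE N Y1 Y0 ^ 2 := by
    unfold varHT expct
    have hpt : ∀ w : Fin N → Bool, p w * (tauHT N p Y1 Y0 w - tauATE N Y1 Y0) ^ 2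
        = p w * tauHT N p Y1 Y0 w ^ 2
          - 2 * tauATE N Y1 Y0 * (p w * tauHT N p Y1 Y0 w)
          + tauATE N Y1 Y0 ^ 2 * p w := fun w => by ring
    rw [Finset.sum_congr rfl fun w _ => hpt w, Finset.sum_add_distrib,
      Finset.sum_sub_distrib, ← Finset.mul_sum, ← Finset.mul_sum]
    have h2 := hunb; unfold expct at h2
    rw [h2, hsum]; ring
  -- mixed second moments
  have hg : ∀ i j, ∑ w : Fin N → Bool, p w * (auxA N p Y1 Y0 i w * auxA N p Y1 Y0 j w)
      = auxG N p Y1 Y0 i j := by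
    intro i j
    unfold auxA auxG
    exact aux_L2 p i j _ _ _ _
  have hE2 : (∑ w : Fin N → Bool, p w * tauHT N p Y1 Y0 w ^ 2)
      = (1 / (N : ℝ) ^ 2) * ∑ i, ∑ j, auxG N p Y1 Y0 i j := by
    calc ∑ w : Fin N → Bool, p w * tauHT N p Y1 Y0 w ^ 2
        = ∑ w : Fin N → Bool, (1 / (N : ℝ) ^ 2)
            * ∑ i, ∑ j, p w * (auxA N p Y1 Y0 i w * auxA N p Y1 Y0 j w) := by
          refine Finset.sum_congr rfl fun w _ => ?_
          rw [htauHT w, mul_pow, pow_two (∑ i, auxA N p Y1 Y0 i w), Finset.sum_mul_sum]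
          simp only [Finset.mul_sum]
          refine Finset.sum_congr rfl fun i _ => Finset.sum_congr rfl fun j _ => ?_
          ring
      _ = (1 / (N : ℝ) ^ 2) * ∑ i, ∑ j,
            ∑ w : Fin N → Bool, p w * (auxA N p Y1 Y0 i w * auxA N p Y1 Y0 j w) := by
          rw [← Finset.mul_sum, Finset.sum_comm]
          congr 1
          exact Finset.sum_congr rfl fun i _ => by rw [Finset.sum_comm]
      _ = (1 / (N : ℝ) ^ 2) * ∑ i, ∑ j, auxG N p Y1 Y0 i j := by
          congr 1
          exact Finset.sum_congr rfl fun i _ => Finset.sum_congr rfl fun j _ => hg i j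
  have hgii : ∀ i, auxG N p Y1 Y0 i i
      = Y1 i ^ 2 / piS N p i + Y0 i ^ 2 / (1 - piS N p i) := by
    intro i
    unfold auxG
    rw [jointP_tt, jointP_ff p hsum, jointP_tf, jointP_ft]
    field_simp [hπ0 i, hπ1 i]
    ring
  have hgsym : ∀ i j, auxG N p Y1 Y0 j i = auxG N p Y1 Y0 i j := by
    intro i j
    unfold auxG
    rw [jointP_symm p j i true true, jointP_symm p j i true false,
      jointP_symm p j i false true, jointP_symm p j i false false]
    ring
  -- symmetry of Q
  have hQsym : ∀ i j, Q j i = Q i j := by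
    intro i j
    have h2 := congrFun (congrFun hQ.1 i) j
    simpa [Matrix.conjTranspose_apply] using h2
  -- the quadratic form, pair-split
  have hquad : (fun i => Y1 i - Y0 i) ⬝ᵥ Q.mulVec (fun i => Y1 i - Y0 i)
      = (1 / (N : ℝ) ^ 2) * (∑ i, (Y1 i - Y0 i) ^ 2)
        + 2 * ∑ i, ∑ j, (if i < j then Q i j * ((Y1 i - Y0 i) * (Y1 j - Y0 j)) else 0) := by
    have h0 : (fun i => Y1 i - Y0 i) ⬝ᵥ Q.mulVec (fun i => Y1 i - Y0 i)
        = ∑ i, ∑ j, (Y1 i - Y0 i) * (Q i j * (Y1 j - Y0 j)) := by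
      simp [dotProduct, Matrix.mulVec, Finset.mul_sum]
    rw [h0, pair_split]
    rw [show (∑ i, (Y1 i - Y0 i) * (Q i i * (Y1 i - Y0 i)))
        = (1 / (N : ℝ) ^ 2) * ∑ i, (Y1 i - Y0 i) ^ 2 from by
      rw [Finset.mul_sum]
      exact Finset.sum_congr rfl fun i _ => by rw [hdiag i]; ring]
    rw [show (∑ i, ∑ j, (if i < j then
          (Y1 i - Y0 i) * (Q i j * (Y1 j - Y0 j))
            + (Y1 j - Y0 j) * (Q j i * (Y1 i - Y0 i)) else 0))
        = 2 * ∑ i, ∑ j, (if i < j then Q i j * ((Y1 i - Y0 i) * (Y1 j - Y0 j)) else 0) from by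
      rw [← pairsum_smul]
      exact pairsum_congr _ _ fun i j _ => by rw [hQsym i j]; ring]
  -- τ², pair-split
  have htau2 : tauATE N Y1 Y0 ^ 2
      = (1 / (N : ℝ) ^ 2) * (∑ i, (Y1 i - Y0 i) ^ 2)
        + (2 / (N : ℝ) ^ 2)
          * ∑ i, ∑ j, (if i < j then (Y1 i - Y0 i) * (Y1 j - Y0 j) else 0) := by
    unfold tauATE
    rw [mul_pow, pow_two (∑ i, (Y1 i - Y0 i)), Finset.sum_mul_sum, pair_split]
    rw [show (∑ i, (Y1 i - Y0 i) * (Y1 i - Y0 i)) = ∑ i, (Y1 i - Y0 i) ^ 2 from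
      Finset.sum_congr rfl fun i _ => (pow_two _).symm]
    rw [show (∑ i, ∑ j, (if i < j then
          (Y1 i - Y0 i) * (Y1 j - Y0 j) + (Y1 j - Y0 j) * (Y1 i - Y0 i) else 0))
        = 2 * ∑ i, ∑ j, (if i < j then (Y1 i - Y0 i) * (Y1 j - Y0 j) else 0) from by
      rw [← pairsum_smul]
      exact pairsum_congr _ _ fun i j _ => by ring]
    ring
  -- key pointwise identity for the pair terms of the RHS
  have hkey : ∀ i j : Fin N, i < j →
      ((2 : ℝ) * (Y1 i * Y1 j *
              (jointP N p i j true true / ((N : ℝ) ^ 2 * piS N p i * piS N p j)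
                + Q i j - 1 / (N : ℝ) ^ 2)
            + Y0 i * Y0 j *
              (jointP N p i j false false / ((N : ℝ) ^ 2 * (1 - piS N p i) * (1 - piS N p j))
                + Q i j - 1 / (N : ℝ) ^ 2)))
        - (2 : ℝ) * (Y1 i * Y0 j *
              (jointP N p i j true false / ((N : ℝ) ^ 2 * piS N p i * (1 - piS N p j))
                + Q i j - 1 / (N : ℝ) ^ 2)
            + Y0 i * Y1 j *
              (jointP N p i j false true / ((N : ℝ) ^ 2 * (1 - piS N p i) * piS N p j)
                + Q i j - 1 / (N : ℝ) ^ 2))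
      = (2 / (N : ℝ) ^ 2) * auxG N p Y1 Y0 i j
        + 2 * (Q i j * ((Y1 i - Y0 i) * (Y1 j - Y0 j)))
        - (2 / (N : ℝ) ^ 2) * ((Y1 i - Y0 i) * (Y1 j - Y0 j)) := by
    intro i j _
    unfold auxG
    simp only [← div_div]
    ring
  -- assemble
  rw [hvar, hE2, pair_split (auxG N p Y1 Y0)]
  rw [show (∑ i, auxG N p Y1 Y0 i i)
      = (∑ i, (Y1 i) ^ 2 / piS N p i) + ∑ i, (Y0 i) ^ 2 / (1 - piS N p i) by
    rw [← Finset.sum_add_distrib]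
    exact Finset.sum_congr rfl fun i _ => hgii i]
  rw [show (∑ i, ∑ j, (if i < j then auxG N p Y1 Y0 i j + auxG N p Y1 Y0 j i else 0))
      = 2 * ∑ i, ∑ j, (if i < j then auxG N p Y1 Y0 i j else 0) by
    rw [← pairsum_smul]
    exact pairsum_congr _ _ fun i j _ => by rw [hgsym i j]; ring]
  rw [htau2, hquad]
  -- now use hkey on the RHS pair sums
  have hR : (2 * ∑ i, ∑ j, (if i < j then
            Y1 i * Y1 j *
              (jointP N p i j true true / ((N : ℝ) ^ 2 * piS N p i * piS N p j)
                + Q i j - 1 / (N : ℝ) ^ 2)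
            + Y0 i * Y0 j *
              (jointP N p i j false false / ((N : ℝ) ^ 2 * (1 - piS N p i) * (1 - piS N p j))
                + Q i j - 1 / (N : ℝ) ^ 2)
          else 0)
        - 2 * ∑ i, ∑ j, (if i < j then
            Y1 i * Y0 j *
              (jointP N p i j true false / ((N : ℝ) ^ 2 * piS N p i * (1 - piS N p j))
                + Q i j - 1 / (N : ℝ) ^ 2)
            + Y0 i * Y1 j *
              (jointP N p i j false true / ((N : ℝ) ^ 2 * (1 - piS N p i) * piS N p j)
                + Q i j - 1 / (N : ℝ) ^ 2)
          else 0))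
      = (2 / (N : ℝ) ^ 2) * (∑ i, ∑ j, (if i < j then auxG N p Y1 Y0 i j else 0))
        + 2 * (∑ i, ∑ j, (if i < j then Q i j * ((Y1 i - Y0 i) * (Y1 j - Y0 j)) else 0))
        - (2 / (N : ℝ) ^ 2)
          * ∑ i, ∑ j, (if i < j then (Y1 i - Y0 i) * (Y1 j - Y0 j) else 0) := by
    rw [← pairsum_smul, ← pairsum_smul, ← pairsum_smul, ← pairsum_smul, ← pairsum_smul,
      ← Finset.sum_sub_distrib, ← Finset.sum_add_distrib, ← Finset.sum_sub_distrib]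
    refine Finset.sum_congr rfl fun i _ => ?_
    rw [← Finset.sum_sub_distrib, ← Finset.sum_add_distrib, ← Finset.sum_sub_distrib]
    refine Finset.sum_congr rfl fun j _ => ?_
    split_ifs with hij
    · exact hkey i j hij
    · ring
  linear_combination -hR
end
end

section
/- Let p be a design on N units, N divisible by 4, with π_i = 1/2 for all i and Σ_i w_i = N/2 for every w ∈ 𝒲, and let G assign to each w ∈ 𝒲 a nonempty finite set G(w) of substitutes of w. If the treatment effects are homogeneous, i.e., Y_i(1) − Y_i(0) = τ for all i = 1,…,N, then the contrast variance estimator is unbiased: E[V̂_sub(W)] = Var(τ̂). -/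
open Finset
open scoped Classical

noncomputable section

/-- Observed outcome of unit `i` under assignment `w`. -/
def yObs (N : ℕ) (Y1 Y0 : Fin N → ℝ) (w : Fin N → Bool) (i : Fin N) : ℝ :=
  if w i then Y1 i else Y0 i

/-- `l_i(w) = 1` if treated, `−1` if control. -/
def ell (N : ℕ) (w : Fin N → Bool) (i : Fin N) : ℝ :=
  if w i then 1 else -1

/-- The (difference-in-means / HT with `π_i = 1/2`) estimator
`τ̂(w) = (2/N)(Σ_{w_i=1} y_i(w) − Σ_{w_i=0} y_i(w))`. -/
def tauDM (N : ℕ) (Y1 Y0 : Fin N → ℝ) (w : Fin N → Bool) : ℝ :=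
  (2 / (N : ℝ)) * ((∑ i, if w i then yObs N Y1 Y0 w i else 0)
    - ∑ i, if w i then 0 else yObs N Y1 Y0 w i)

/-- Design-based variance of `τ̂`. -/
def varDM (N : ℕ) (p : (Fin N → Bool) → ℝ) (Y1 Y0 : Fin N → ℝ) : ℝ :=
  expct N p (fun w => (tauDM N Y1 Y0 w - tauATE N Y1 Y0) ^ 2)

/-- The treated set `T(w)`. -/
def Tset (N : ℕ) (w : Fin N → Bool) : Finset (Fin N) :=
  univ.filter fun i => w i = true

/-- The contrast variance estimator
`V̂_sub(W) = (4/N²)·Σ_{w ∈ 𝒲 : W ∈ G(w)} (p_w/p_W)·(1/|G(w)|)·(Σ_i l_i(w)·y_i(W))²`. -/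
def Vsub (N : ℕ) (p : (Fin N → Bool) → ℝ) (Y1 Y0 : Fin N → ℝ)
    (G : (Fin N → Bool) → Finset (Fin N → Bool)) (W : Fin N → Bool) : ℝ :=
  (4 / (N : ℝ) ^ 2) * ∑ w : Fin N → Bool,
    if 0 < p w ∧ W ∈ G w then
      (p w / p W) * (1 / ((G w).card : ℝ)) * (∑ i, ell N w i * yObs N Y1 Y0 W i) ^ 2
    else 0


lemma indsum (N : ℕ) (w W : Fin N → Bool)
    (hc : (Tset N W ∩ Tset N w).card = (Tset N W ∩ (Tset N w)ᶜ).card) :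
    ∑ i, (if W i then ell N w i else 0) = (0:ℝ) := by
  have hterm : ∀ i : Fin N, (if W i then ell N w i else 0)
      = (if W i = true ∧ w i = true then (1:ℝ) else 0)
        - (if W i = true ∧ ¬ (w i = true) then (1:ℝ) else 0) := by
    intro i
    by_cases hW : W i <;> by_cases hw : w i <;> simp [ell, hW, hw]
  rw [Finset.sum_congr rfl fun i _ => hterm i, Finset.sum_sub_distrib,
    Finset.sum_boole, Finset.sum_boole]
  have e1 : (univ.filter fun i => W i = true ∧ w i = true) = Tset N W ∩ Tset N w := by
    ext i; simp [Tset]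
  have e2 : (univ.filter fun i => W i = true ∧ ¬ (w i = true))
      = Tset N W ∩ (Tset N w)ᶜ := by
    ext i; simp [Tset]
  rw [e1, e2, hc, sub_self]

lemma contrast_eq (N : ℕ) (Y1 Y0 : Fin N → ℝ)
    (hhom : ∀ i, Y1 i - Y0 i = tauATE N Y1 Y0) (w W : Fin N → Bool)
    (hc : (Tset N W ∩ Tset N w).card = (Tset N W ∩ (Tset N w)ᶜ).card) :
    ∑ i, ell N w i * yObs N Y1 Y0 W i = ∑ i, ell N w i * Y0 i := by
  have hterm : ∀ i : Fin N, ell N w i * yObs N Y1 Y0 W i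
      = ell N w i * Y0 i + (if W i then ell N w i else 0) * tauATE N Y1 Y0 := by
    intro i
    have h := hhom i
    by_cases hW : W i <;> by_cases hw : w i <;>
      simp [ell, yObs, hW, hw] <;> linarith
  rw [Finset.sum_congr rfl fun i _ => hterm i, Finset.sum_add_distrib,
    ← Finset.sum_mul, indsum N w W hc, zero_mul, add_zero]

lemma tauDM_sub (N : ℕ) (Y1 Y0 : Fin N → ℝ)
    (hhom : ∀ i, Y1 i - Y0 i = tauATE N Y1 Y0) (h2 : 2 ∣ N)
    (w : Fin N → Bool) (hw : (Tset N w).card = N / 2) :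
    tauDM N Y1 Y0 w - tauATE N Y1 Y0
      = (2 / (N : ℝ)) * ∑ i, ell N w i * Y0 i := by
  rcases Nat.eq_zero_or_pos N with hN | hN
  · subst hN
    simp [tauDM, tauATE]
  have hstep : (∑ i, if w i then yObs N Y1 Y0 w i else 0)
      - (∑ i, if w i then 0 else yObs N Y1 Y0 w i)
      = ∑ i, ell N w i * yObs N Y1 Y0 w i := by
    rw [← Finset.sum_sub_distrib]
    refine Finset.sum_congr rfl fun i _ => ?_
    by_cases hw' : w i <;> simp [ell, hw']
  have hterm : ∀ i : Fin N, ell N w i * yObs N Y1 Y0 w i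
      = ell N w i * Y0 i + (if w i then tauATE N Y1 Y0 else 0) := by
    intro i
    have h := hhom i
    by_cases hw' : w i <;> simp [ell, yObs, hw'] <;> linarith
  have hcard : (∑ i : Fin N, if w i then tauATE N Y1 Y0 else 0)
      = ((N : ℝ) / 2) * tauATE N Y1 Y0 := by
    rw [← Finset.sum_filter]
    have : (univ.filter fun i => w i = true) = Tset N w := rfl
    rw [this, Finset.sum_const, hw]
    rw [nsmul_eq_mul, Nat.cast_div h2 (by norm_num : (2:ℝ) ≠ 0)]
    norm_num
  have hNne : (N : ℝ) ≠ 0 := Nat.cast_ne_zero.mpr hN.ne'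
  rw [tauDM, hstep, Finset.sum_congr rfl fun i _ => hterm i,
    Finset.sum_add_distrib, hcard]
  field_simp
  ring

/-- Theorem 1 (first part): under homogeneous treatment effects the contrast
variance estimator is unbiased. -/
theorem contrast_unbiased_under_homogeneity
    (N : ℕ) (hN4 : 4 ∣ N)
    (p : (Fin N → Bool) → ℝ) (hp : ∀ w, 0 ≤ p w)
    (hsum : ∑ w : Fin N → Bool, p w = 1)
    (hpi : ∀ i, piS N p i = 1 / 2)
    (hsupp : ∀ w, 0 < p w → (Tset N w).card = N / 2)
    (G : (Fin N → Bool) → Finset (Fin N → Bool))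
    (hGne : ∀ w, 0 < p w → (G w).Nonempty)
    (hGsub : ∀ w, 0 < p w → ∀ w' ∈ G w,
      0 < p w' ∧ (Tset N w' ∩ Tset N w).card = N / 4 ∧
        (Tset N w' ∩ (Tset N w)ᶜ).card = N / 4)
    (Y1 Y0 : Fin N → ℝ)
    (hhom : ∀ i, Y1 i - Y0 i = tauATE N Y1 Y0) :
    expct N p (Vsub N p Y1 Y0 G) = varDM N p Y1 Y0 := by
  classical
  have h2 : 2 ∣ N := dvd_trans (by norm_num) hN4
  set τ := tauATE N Y1 Y0 with hτ
  set C : (Fin N → Bool) → ℝ := fun w => ∑ i, ell N w i * Y0 i with hC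
  rw [expct, varDM, expct]
  have key : ∀ w : Fin N → Bool,
      p w * Vsub N p Y1 Y0 G w
      = ∑ w' : Fin N → Bool,
          if 0 < p w' ∧ w ∈ G w' then
            (4 / (N:ℝ)^2) * p w' * (1 / ((G w').card : ℝ)) * (C w') ^ 2
          else 0 := by
    intro W
    rw [Vsub, Finset.mul_sum, Finset.mul_sum]
    refine Finset.sum_congr rfl fun w _ => ?_
    by_cases h : 0 < p w ∧ W ∈ G w
    · obtain ⟨hPW, hc1, hc2⟩ := hGsub w h.1 W h.2
      have hS : (∑ i, ell N w i * yObs N Y1 Y0 W i) = C w :=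
        contrast_eq N Y1 Y0 hhom w W (hc1.trans hc2.symm)
      rw [if_pos h, if_pos h, hS]
      have hPWne : p W ≠ 0 := hPW.ne'
      have hcancel : p w / p W * p W = p w := div_mul_cancel₀ _ hPWne
      linear_combination (4 / (N:ℝ)^2 * (1 / ((G w).card : ℝ)) * (C w)^2) * hcancel
    · rw [if_neg h, if_neg h, mul_zero, mul_zero]
  rw [Finset.sum_congr rfl fun W _ => key W, Finset.sum_comm]
  refine Finset.sum_congr rfl fun w _ => ?_
  by_cases hw : 0 < p w
  · have hcard : ((G w).card : ℝ) ≠ 0 := by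
      exact_mod_cast Finset.card_ne_zero_of_mem (hGne w hw).choose_spec
    have hsum' : (∑ W : Fin N → Bool,
        if 0 < p w ∧ W ∈ G w then
          (4 / (N:ℝ)^2) * p w * (1 / ((G w).card : ℝ)) * (C w) ^ 2
        else 0)
        = (4 / (N:ℝ)^2) * p w * (C w) ^ 2 := by
      have : ∀ W : Fin N → Bool, (if 0 < p w ∧ W ∈ G w then
          (4 / (N:ℝ)^2) * p w * (1 / ((G w).card : ℝ)) * (C w) ^ 2 else 0)
          = (if W ∈ G w then
          (4 / (N:ℝ)^2) * p w * (1 / ((G w).card : ℝ)) * (C w) ^ 2 else 0) := by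
        intro W
        by_cases hWG : W ∈ G w <;> simp [hWG, hw]
      rw [Finset.sum_congr rfl fun W _ => this W, Finset.sum_ite_mem,
        Finset.univ_inter, Finset.sum_const, nsmul_eq_mul]
      linear_combination (4 / (N:ℝ)^2 * p w * (C w)^2) * (mul_inv_cancel₀ hcard)
    rw [hsum', tauDM_sub N Y1 Y0 hhom h2 w (hsupp w hw)]
    have hCw : (∑ i, ell N w i * Y0 i) = C w := rfl
    rw [hCw]
    ring
  · have hp0 : p w = 0 := le_antisymm (not_lt.mp hw) (hp w)
    simp [hp0, hw]
end
end

section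
/- Let p be a design on N units, N divisible by 4, with π_i = 1/2 for all i and Σ_i w_i = N/2 for every w ∈ 𝒲, and let G assign to each w ∈ 𝒲 a nonempty finite set G(w) of substitutes of w. Suppose in addition that the support is closed under label switching (w ∈ 𝒲 if and only if 1 − w ∈ 𝒲) and that each G(w) is closed under label switching (w̃ ∈ G(w) if and only if 1 − w̃ ∈ G(w)). Then the contrast variance estimator is conservative: E[V̂_sub(W)] ≥ Var(τ̂), and moreover V̂_sub(W) ≥ 0 for every W ∈ 𝒲. -/
open Finset
open scoped Classical

noncomputable section

/- Exchanging the two sums in `E[V̂_sub]` cancels `p_W`, so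
`E[V̂_sub] = Σ_w p_w (4/N²) · mean_{W ∈ G(w)} S(w, W)²` with `S(w, W) = Σ_i l_i(w) y_i(W)`.
The contrasts of `w` against `W` and against `1 − W` add up to
`Σ_i l_i(w) (Y_i(1) + Y_i(0)) = N (τ̂(w) − τ)`, so pairing `W` with `1 − W` in `G(w)` bounds
that mean below by `N² (τ̂(w) − τ)² / 4`, and the sum dominates `Var(τ̂)` termwise. -/

theorem Finset.card_mul_sq_half_le_sum_sq {α : Type*} (s : Finset α) (σ : α → α)
    (hσ : Function.Involutive σ) (hs : ∀ x ∈ s, σ x ∈ s) (f : α → ℝ) (c : ℝ)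
    (hf : ∀ x ∈ s, f x + f (σ x) = c) :
    (s.card : ℝ) * (c / 2) ^ 2 ≤ ∑ x ∈ s, f x ^ 2 := by
  have hswap : ∑ x ∈ s, f (σ x) ^ 2 = ∑ x ∈ s, f x ^ 2 :=
    Finset.sum_nbij' σ σ hs hs (fun x _ => hσ x) (fun x _ => hσ x) (fun _ _ => rfl)
  have hpair : ∀ x ∈ s, 2 * (c / 2) ^ 2 ≤ f x ^ 2 + f (σ x) ^ 2 := by
    intro x hx
    rw [← hf x hx]
    nlinarith [sq_nonneg (f x - f (σ x))]
  have := Finset.sum_le_sum hpair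
  rw [Finset.sum_add_distrib, hswap, Finset.sum_const, nsmul_eq_mul] at this
  linarith

section Contrast

variable {N : ℕ} (Y1 Y0 : Fin N → ℝ)

def contrast (w W : Fin N → Bool) : ℝ :=
  ∑ i, ell N w i * yObs N Y1 Y0 W i

theorem contrast_add_contrast_not (w W : Fin N → Bool) :
    contrast Y1 Y0 w W + contrast Y1 Y0 w (fun i => ! W i) = ∑ i, ell N w i * (Y1 i + Y0 i) := by
  rw [contrast, contrast, ← Finset.sum_add_distrib]
  refine Finset.sum_congr rfl fun i _ => ?_
  cases h : W i <;>
    simp only [yObs, h, Bool.not_false, Bool.not_true, Bool.false_eq_true, ↓reduceIte] <;> ring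

theorem tauDM_sub_tauATE (w : Fin N → Bool) :
    tauDM N Y1 Y0 w - tauATE N Y1 Y0 = (1 / (N : ℝ)) * ∑ i, ell N w i * (Y1 i + Y0 i) := by
  have hunit : ∀ i, ell N w i * (Y1 i + Y0 i)
      = 2 * ((if w i then yObs N Y1 Y0 w i else 0) - (if w i then 0 else yObs N Y1 Y0 w i))
        - (Y1 i - Y0 i) := by
    intro i
    cases h : w i <;> simp only [ell, yObs, h, Bool.false_eq_true, ↓reduceIte] <;> ring
  simp only [tauDM, tauATE, hunit, Finset.sum_sub_distrib, ← Finset.mul_sum]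
  ring

theorem sq_tauDM_sub_tauATE_le (G : Finset (Fin N → Bool)) (hGne : G.Nonempty)
    (hGclosed : ∀ W ∈ G, (fun i => ! W i) ∈ G) (w : Fin N → Bool) :
    (tauDM N Y1 Y0 w - tauATE N Y1 Y0) ^ 2
      ≤ 4 / (N : ℝ) ^ 2 * ((∑ W ∈ G, contrast Y1 Y0 w W ^ 2) / G.card) := by
  have hcard : (0 : ℝ) < G.card := by exact_mod_cast hGne.card_pos
  have hpair := G.card_mul_sq_half_le_sum_sq (fun W i => ! W i)
    (fun W => funext fun i => Bool.not_not (W i)) hGclosed (contrast Y1 Y0 w) _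
    (fun W _ => contrast_add_contrast_not Y1 Y0 w W)
  rw [tauDM_sub_tauATE]
  calc ((1 / (N : ℝ)) * ∑ i, ell N w i * (Y1 i + Y0 i)) ^ 2
      = 4 / (N : ℝ) ^ 2 * ((∑ i, ell N w i * (Y1 i + Y0 i)) / 2) ^ 2 := by ring
    _ ≤ _ := by gcongr; exact (le_div_iff₀' hcard).mpr hpair

end Contrast

section Design

variable {N : ℕ} {p : (Fin N → Bool) → ℝ} (hp : ∀ w, 0 ≤ p w)
include hp

theorem expct_mono {f g : (Fin N → Bool) → ℝ} (hfg : ∀ w, 0 < p w → f w ≤ g w) :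
    expct N p f ≤ expct N p g := by
  refine Finset.sum_le_sum fun w _ => ?_
  rcases (hp w).eq_or_lt with hw | hw
  · simp [← hw]
  · exact mul_le_mul_of_nonneg_left (hfg w hw) hw.le

theorem Vsub_nonneg (Y1 Y0 : Fin N → ℝ) (G : (Fin N → Bool) → Finset (Fin N → Bool))
    (W : Fin N → Bool) : 0 ≤ Vsub N p Y1 Y0 G W := by
  refine mul_nonneg (by positivity) (Finset.sum_nonneg fun w _ => ?_)
  split_ifs
  · exact mul_nonneg (mul_nonneg (div_nonneg (hp w) (hp W)) (by positivity)) (sq_nonneg _)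
  · exact le_rfl

theorem expct_Vsub (Y1 Y0 : Fin N → ℝ) (G : (Fin N → Bool) → Finset (Fin N → Bool))
    (hG : ∀ w, 0 < p w → ∀ W ∈ G w, 0 < p W) :
    expct N p (Vsub N p Y1 Y0 G) = expct N p fun w =>
      4 / (N : ℝ) ^ 2 * ((∑ W ∈ G w, contrast Y1 Y0 w W ^ 2) / (G w).card) := by
  calc expct N p (Vsub N p Y1 Y0 G)
      = ∑ W, ∑ w, if 0 < p w ∧ W ∈ G w then
          p w * (4 / (N : ℝ) ^ 2 * (contrast Y1 Y0 w W ^ 2 / (G w).card)) else 0 := by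
        refine Finset.sum_congr rfl fun W _ => ?_
        rw [Vsub, Finset.mul_sum, Finset.mul_sum]
        refine Finset.sum_congr rfl fun w _ => ?_
        split_ifs with h
        · have := (hG w h.1 W h.2).ne'
          simp only [contrast]
          field_simp
        · simp
    _ = ∑ w, ∑ W, if 0 < p w ∧ W ∈ G w then
          p w * (4 / (N : ℝ) ^ 2 * (contrast Y1 Y0 w W ^ 2 / (G w).card)) else 0 :=
        Finset.sum_comm
    _ = _ := by
        refine Finset.sum_congr rfl fun w _ => ?_
        rcases (hp w).eq_or_lt with hw | hw
        · simp [← hw]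
        · simp only [hw, true_and]
          rw [Finset.sum_ite_mem, Finset.univ_inter, ← Finset.mul_sum, ← Finset.mul_sum,
            Finset.sum_div]

end Design

theorem contrast_conservative_and_nonneg_general
    (N : ℕ)
    (p : (Fin N → Bool) → ℝ) (hp : ∀ w, 0 ≤ p w)
    (G : (Fin N → Bool) → Finset (Fin N → Bool))
    (hGne : ∀ w, 0 < p w → (G w).Nonempty)
    (hGsub : ∀ w, 0 < p w → ∀ w' ∈ G w,
      0 < p w' ∧ (Tset N w' ∩ Tset N w).card = N / 4 ∧
        (Tset N w' ∩ (Tset N w)ᶜ).card = N / 4)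
    (hGclosed : ∀ w, 0 < p w → ∀ w' : Fin N → Bool,
      w' ∈ G w ↔ (fun i => ! w' i) ∈ G w)
    (Y1 Y0 : Fin N → ℝ) :
    varDM N p Y1 Y0 ≤ expct N p (Vsub N p Y1 Y0 G) ∧
      ∀ W : Fin N → Bool, 0 < p W → 0 ≤ Vsub N p Y1 Y0 G W := by
  refine ⟨?_, fun W _ => Vsub_nonneg hp Y1 Y0 G W⟩
  rw [expct_Vsub hp Y1 Y0 G fun w hw W hW => (hGsub w hw W hW).1]
  exact expct_mono hp fun w hw =>
    sq_tauDM_sub_tauATE_le Y1 Y0 (G w) (hGne w hw) (fun W hW => (hGclosed w hw W).mp hW) w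

/-- Theorem 1 (second part): if the support and the substitute sets are closed under
label switching, the contrast estimator is conservative, and it is non-negative on
the support. -/
theorem contrast_conservative_and_nonneg
    (N : ℕ) (hN4 : 4 ∣ N)
    (p : (Fin N → Bool) → ℝ) (hp : ∀ w, 0 ≤ p w)
    (hsum : ∑ w : Fin N → Bool, p w = 1)
    (hpi : ∀ i, piS N p i = 1 / 2)
    (hsupp : ∀ w, 0 < p w → (Tset N w).card = N / 2)
    (hclosed : ∀ w : Fin N → Bool, 0 < p w ↔ 0 < p (fun i => ! w i))
    (G : (Fin N → Bool) → Finset (Fin N → Bool))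
    (hGne : ∀ w, 0 < p w → (G w).Nonempty)
    (hGsub : ∀ w, 0 < p w → ∀ w' ∈ G w,
      0 < p w' ∧ (Tset N w' ∩ Tset N w).card = N / 4 ∧
        (Tset N w' ∩ (Tset N w)ᶜ).card = N / 4)
    (hGclosed : ∀ w, 0 < p w → ∀ w' : Fin N → Bool,
      w' ∈ G w ↔ (fun i => ! w' i) ∈ G w)
    (Y1 Y0 : Fin N → ℝ) :
    varDM N p Y1 Y0 ≤ expct N p (Vsub N p Y1 Y0 G) ∧
      ∀ W : Fin N → Bool, 0 < p W → 0 ≤ Vsub N p Y1 Y0 G W :=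
  contrast_conservative_and_nonneg_general N p hp G hGne hGsub hGclosed Y1 Y0
end
end

section
/- Let p be a design on N units with π_i = 1/2 for all i, let β ∈ ℝ, and let ĉ(w) be the β-imputed vector. Then: (i) E[ψ(ĉ(W))] ≥ Var(τ̂). (ii) If in addition every w in the support satisfies Σ_i w_i = N/2 and the treatment effects are homogeneous, Y_i(1) − Y_i(0) = τ for all i, then E[ψ(ĉ(W))] = Var(τ̂) + (τ − β)²·E[ψ(χ(W))], where χ(W) ∈ ℝ^N is the real-valued 0–1 vector with coordinates W_i. -/
open Finset

noncomputable section

/-- `ψ(x) = Σ_w p_w·((2/N)·(Σ_{w_i=1} x_i − Σ_{w_i=0} x_i))²`. -/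
def psiHalf (N : ℕ) (p : (Fin N → Bool) → ℝ) (x : Fin N → ℝ) : ℝ :=
  ∑ w : Fin N → Bool, p w *
    ((2 / (N : ℝ)) * ((∑ i, if w i then x i else 0) - ∑ i, if w i then 0 else x i)) ^ 2


/-- The `β`-imputed vector: `ĉ_i(w) = w_i·(Y_i(1) − β/2) + (1 − w_i)·(Y_i(0) + β/2)`. -/
def cHatBeta (N : ℕ) (Y1 Y0 : Fin N → ℝ) (β : ℝ) (w : Fin N → Bool) (i : Fin N) : ℝ :=
  if w i then Y1 i - β / 2 else Y0 i + β / 2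

namespace PropAux

/-- sign vector -/
def sg (N : ℕ) (w : Fin N → Bool) (i : Fin N) : ℝ := if w i then 1 else -1

/-- linear statistic -/
def G (N : ℕ) (x : Fin N → ℝ) (w : Fin N → Bool) : ℝ :=
  (2 / (N : ℝ)) * ∑ i, sg N w i * x i

lemma diff_eq (N : ℕ) (x : Fin N → ℝ) (w : Fin N → Bool) :
    ((∑ i, if w i then x i else 0) - ∑ i, if w i then 0 else x i) = ∑ i, sg N w i * x i := by
  rw [← Finset.sum_sub_distrib]
  refine Finset.sum_congr rfl fun i _ => ?_
  by_cases h : w i <;> simp [sg, h]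

lemma psi_eq (N : ℕ) (p : (Fin N → Bool) → ℝ) (x : Fin N → ℝ) :
    psiHalf N p x = ∑ w : Fin N → Bool, p w * (G N x w) ^ 2 := by
  unfold psiHalf G
  refine Finset.sum_congr rfl fun w _ => ?_
  rw [diff_eq]

lemma Es (N : ℕ) (p : (Fin N → Bool) → ℝ)
    (hsum : ∑ w : Fin N → Bool, p w = 1)
    (hpi : ∀ i, piS N p i = 1 / 2) (i : Fin N) :
    ∑ w : Fin N → Bool, p w * sg N w i = 0 := by
  have h1 : ∑ w : Fin N → Bool, p w * sg N w i
      = (∑ w : Fin N → Bool, if w i then p w else 0)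
        - ∑ w : Fin N → Bool, if w i then 0 else p w := by
    rw [← Finset.sum_sub_distrib]
    refine Finset.sum_congr rfl fun w _ => ?_
    by_cases h : w i <;> simp [sg, h]
  have h2 : (∑ w : Fin N → Bool, if w i then p w else 0)
      + (∑ w : Fin N → Bool, if w i then 0 else p w) = 1 := by
    calc (∑ w : Fin N → Bool, if w i then p w else 0)
          + (∑ w : Fin N → Bool, if w i then 0 else p w)
        = ∑ w : Fin N → Bool, ((if w i then p w else 0) + (if w i then 0 else p w)) :=
          Finset.sum_add_distrib.symm
      _ = ∑ w : Fin N → Bool, p w :=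
          Finset.sum_congr rfl fun w _ => by by_cases h : w i <;> simp [h]
      _ = 1 := hsum
  have h3 := hpi i
  unfold piS at h3
  rw [h1]
  linarith

def mvec (N : ℕ) (Y1 Y0 : Fin N → ℝ) (i : Fin N) : ℝ := (Y1 i + Y0 i) / 2

def dvec (N : ℕ) (Y1 Y0 : Fin N → ℝ) (β : ℝ) (i : Fin N) : ℝ := (Y1 i - Y0 i - β) / 2

lemma tauDM_eq (N : ℕ) (Y1 Y0 : Fin N → ℝ) (w : Fin N → Bool) :
    tauDM N Y1 Y0 w - tauATE N Y1 Y0 = G N (mvec N Y1 Y0) w := by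
  unfold tauDM tauATE G yObs mvec
  rw [← Finset.sum_sub_distrib, Finset.mul_sum, Finset.mul_sum, Finset.mul_sum,
    ← Finset.sum_sub_distrib]
  refine Finset.sum_congr rfl fun i _ => ?_
  have key : (2:ℝ) * ((if w i then (if w i then Y1 i else Y0 i) else 0)
      - (if w i then 0 else (if w i then Y1 i else Y0 i))) - (Y1 i - Y0 i)
      = 2 * (sg N w i * ((Y1 i + Y0 i) / 2)) := by
    by_cases h : w i <;> simp [sg, h] <;> ring
  have hN : (2 / (N:ℝ)) = 2 * (1 / (N:ℝ)) := by ring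
  rw [hN]
  linear_combination (1 / (N:ℝ)) * key

lemma cHat_eq (N : ℕ) (Y1 Y0 : Fin N → ℝ) (β : ℝ) (v : Fin N → Bool) :
    cHatBeta N Y1 Y0 β v = fun i => mvec N Y1 Y0 i + sg N v i * dvec N Y1 Y0 β i := by
  funext i
  unfold cHatBeta mvec sg dvec
  by_cases h : v i <;> simp [h] <;> ring

lemma G_add (N : ℕ) (x y : Fin N → ℝ) (w : Fin N → Bool) :
    G N (fun i => x i + y i) w = G N x w + G N y w := by
  unfold G
  rw [← mul_add, ← Finset.sum_add_distrib]
  congr 1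
  exact Finset.sum_congr rfl fun i _ => by ring

/-- expectation over v of G of the sign-scaled vector vanishes -/
lemma EG_zero (N : ℕ) (p : (Fin N → Bool) → ℝ)
    (hsum : ∑ w : Fin N → Bool, p w = 1)
    (hpi : ∀ i, piS N p i = 1 / 2) (d : Fin N → ℝ) (w : Fin N → Bool) :
    ∑ v : Fin N → Bool, p v * G N (fun i => sg N v i * d i) w = 0 := by
  have h1 : ∀ v : Fin N → Bool, p v * G N (fun i => sg N v i * d i) w
      = ∑ i, (2 / (N:ℝ)) * (sg N w i * d i) * (p v * sg N v i) := by
    intro v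
    unfold G
    rw [Finset.mul_sum, Finset.mul_sum]
    exact Finset.sum_congr rfl fun i _ => by ring
  rw [Finset.sum_congr rfl fun v _ => h1 v, Finset.sum_comm]
  refine Finset.sum_eq_zero fun i _ => ?_
  rw [← Finset.mul_sum, Es N p hsum hpi i, mul_zero]

/-- main decomposition -/
lemma main_decomp (N : ℕ) (p : (Fin N → Bool) → ℝ)
    (hsum : ∑ w : Fin N → Bool, p w = 1)
    (hpi : ∀ i, piS N p i = 1 / 2) (Y1 Y0 : Fin N → ℝ) (β : ℝ) :
    expct N p (fun v => psiHalf N p (cHatBeta N Y1 Y0 β v)) =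
      varDM N p Y1 Y0 +
        ∑ v : Fin N → Bool, p v * psiHalf N p (fun i => sg N v i * dvec N Y1 Y0 β i) := by
  have hvar : varDM N p Y1 Y0 = ∑ w : Fin N → Bool, p w * (G N (mvec N Y1 Y0) w) ^ 2 := by
    unfold varDM expct
    exact Finset.sum_congr rfl fun w _ => by dsimp only; rw [tauDM_eq]
  have hpoint : ∀ v : Fin N → Bool,
      psiHalf N p (cHatBeta N Y1 Y0 β v)
        = (∑ w : Fin N → Bool, p w * (G N (mvec N Y1 Y0) w) ^ 2)
          + (∑ w : Fin N → Bool, 2 * (p w * G N (mvec N Y1 Y0) w)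
              * G N (fun i => sg N v i * dvec N Y1 Y0 β i) w)
          + psiHalf N p (fun i => sg N v i * dvec N Y1 Y0 β i) := by
    intro v
    rw [psi_eq, psi_eq, ← Finset.sum_add_distrib, ← Finset.sum_add_distrib]
    refine Finset.sum_congr rfl fun w _ => ?_
    rw [cHat_eq, G_add]
    ring
  unfold expct
  dsimp only
  rw [Finset.sum_congr rfl fun v _ => by rw [hpoint v]]
  have : ∀ v : Fin N → Bool,
      p v * ((∑ w : Fin N → Bool, p w * (G N (mvec N Y1 Y0) w) ^ 2)
          + (∑ w : Fin N → Bool, 2 * (p w * G N (mvec N Y1 Y0) w)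
              * G N (fun i => sg N v i * dvec N Y1 Y0 β i) w)
          + psiHalf N p (fun i => sg N v i * dvec N Y1 Y0 β i))
      = p v * (∑ w : Fin N → Bool, p w * (G N (mvec N Y1 Y0) w) ^ 2)
        + p v * (∑ w : Fin N → Bool, 2 * (p w * G N (mvec N Y1 Y0) w)
              * G N (fun i => sg N v i * dvec N Y1 Y0 β i) w)
        + p v * psiHalf N p (fun i => sg N v i * dvec N Y1 Y0 β i) := fun v => by ring
  rw [Finset.sum_congr rfl fun v _ => this v, Finset.sum_add_distrib, Finset.sum_add_distrib,
    ← Finset.sum_mul, hsum, one_mul, ← hvar]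
  have hcross : ∑ v : Fin N → Bool,
      p v * (∑ w : Fin N → Bool, 2 * (p w * G N (mvec N Y1 Y0) w)
              * G N (fun i => sg N v i * dvec N Y1 Y0 β i) w) = 0 := by
    have hswap : ∀ v : Fin N → Bool,
        p v * (∑ w : Fin N → Bool, 2 * (p w * G N (mvec N Y1 Y0) w)
              * G N (fun i => sg N v i * dvec N Y1 Y0 β i) w)
        = ∑ w : Fin N → Bool, 2 * (p w * G N (mvec N Y1 Y0) w)
              * (p v * G N (fun i => sg N v i * dvec N Y1 Y0 β i) w) := by
      intro v
      rw [Finset.mul_sum]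
      exact Finset.sum_congr rfl fun w _ => by ring
    rw [Finset.sum_congr rfl fun v _ => hswap v, Finset.sum_comm]
    refine Finset.sum_eq_zero fun w _ => ?_
    rw [← Finset.mul_sum, EG_zero N p hsum hpi, mul_zero]
  rw [hcross]
  ring


lemma psi_nonneg (N : ℕ) (p : (Fin N → Bool) → ℝ) (hp : ∀ w, 0 ≤ p w) (x : Fin N → ℝ) :
    0 ≤ psiHalf N p x := by
  rw [psi_eq]
  exact Finset.sum_nonneg fun w _ => mul_nonneg (hp w) (sq_nonneg _)

lemma sum_sg (N : ℕ) (w : Fin N → Bool) :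
    ∑ i, sg N w i = 2 * ((Tset N w).card : ℝ) - N := by
  have h1 : ∀ i, sg N w i = (if w i then (2:ℝ) else 0) - 1 := by
    intro i; by_cases h : w i <;> simp [sg, h] <;> norm_num
  rw [Finset.sum_congr rfl fun i _ => h1 i, Finset.sum_sub_distrib, ← Finset.sum_filter,
    Finset.sum_const, Finset.sum_const]
  simp [Tset, Finset.card_univ]
  ring

lemma even_fact (N : ℕ) (p : (Fin N → Bool) → ℝ) (hp : ∀ w, 0 ≤ p w)
    (hsum : ∑ w : Fin N → Bool, p w = 1)
    (hpi : ∀ i, piS N p i = 1 / 2)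
    (hcard : ∀ w, 0 < p w → (Tset N w).card = N / 2) :
    (2:ℝ) * ((N / 2 : ℕ) : ℝ) = (N : ℝ) := by
  have hL : ∑ i : Fin N, piS N p i = (N:ℝ) * (1/2) := by
    simp [hpi]
  have hswap : ∑ i : Fin N, piS N p i = ∑ w : Fin N → Bool, p w * ((Tset N w).card : ℝ) := by
    unfold piS
    rw [Finset.sum_comm]
    refine Finset.sum_congr rfl fun w _ => ?_
    rw [← Finset.sum_filter, Finset.sum_const]
    simp [Tset, mul_comm]
  have hR : ∑ w : Fin N → Bool, p w * ((Tset N w).card : ℝ) = ((N / 2 : ℕ) : ℝ) := by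
    have h : ∀ w : Fin N → Bool, p w * ((Tset N w).card : ℝ) = p w * ((N / 2 : ℕ) : ℝ) := by
      intro w
      rcases eq_or_lt_of_le (hp w) with h | h
      · rw [← h]; ring
      · rw [hcard w h]
    rw [Finset.sum_congr rfl fun w _ => h w, ← Finset.sum_mul, hsum, one_mul]
  rw [hswap, hR] at hL
  linarith

lemma support_sum_zero (N : ℕ) (p : (Fin N → Bool) → ℝ) (hp : ∀ w, 0 ≤ p w)
    (hsum : ∑ w : Fin N → Bool, p w = 1)
    (hpi : ∀ i, piS N p i = 1 / 2)
    (hcard : ∀ w, 0 < p w → (Tset N w).card = N / 2) :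
    ∀ w : Fin N → Bool, p w ≠ 0 → ∑ i, sg N w i = 0 := by
  intro w hw
  have hpos : 0 < p w := lt_of_le_of_ne (hp w) (Ne.symm hw)
  rw [sum_sg, hcard w hpos]
  have := even_fact N p hp hsum hpi hcard
  linarith

lemma psi_chi (N : ℕ) (p : (Fin N → Bool) → ℝ)
    (hzero : ∀ w : Fin N → Bool, p w ≠ 0 → ∑ i, sg N w i = 0)
    (c : ℝ) (v : Fin N → Bool) :
    psiHalf N p (fun i => sg N v i * c)
      = (2 * c) ^ 2 * psiHalf N p (fun i => if v i then (1:ℝ) else 0) := by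
  rw [psi_eq, psi_eq, Finset.mul_sum]
  refine Finset.sum_congr rfl fun w _ => ?_
  by_cases hw : p w = 0
  · simp [hw]
  · have h0 := hzero w hw
    have hA : ∑ i, sg N w i * (sg N v i * c) = c * ∑ i, sg N w i * sg N v i := by
      rw [Finset.mul_sum]
      exact Finset.sum_congr rfl fun i _ => by ring
    have hB : ∑ i, sg N w i * (if v i then (1:ℝ) else 0)
        = ((∑ i, sg N w i * sg N v i) + ∑ i, sg N w i) / 2 := by
      rw [← Finset.sum_add_distrib]
      rw [Finset.sum_congr rfl (fun i _ => show sg N w i * (if v i then (1:ℝ) else 0)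
        = (sg N w i * sg N v i + sg N w i) / 2 from by
          by_cases h : v i <;> simp [sg, h] <;> ring)]
      rw [← Finset.sum_div]
    unfold G
    rw [hA, hB, h0]
    ring

end PropAux

/-- Proposition 4: (i) the `β`-imputation variance estimator is conservative;
(ii) if additionally the support has equal group sizes and treatment effects are
homogeneous, then `E[ψ(ĉ(W))] = Var(τ̂) + (τ − β)²·E[ψ(χ(W))]`. -/
theorem imputation_conservative_and_bias
    (N : ℕ) (p : (Fin N → Bool) → ℝ) (hp : ∀ w, 0 ≤ p w)
    (hsum : ∑ w : Fin N → Bool, p w = 1)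
    (hpi : ∀ i, piS N p i = 1 / 2)
    (Y1 Y0 : Fin N → ℝ) (β : ℝ) :
    varDM N p Y1 Y0 ≤ expct N p (fun w => psiHalf N p (cHatBeta N Y1 Y0 β w)) ∧
      ((∀ w, 0 < p w → (Tset N w).card = N / 2) →
        (∀ i, Y1 i - Y0 i = tauATE N Y1 Y0) →
        expct N p (fun w => psiHalf N p (cHatBeta N Y1 Y0 β w)) =
          varDM N p Y1 Y0 + (tauATE N Y1 Y0 - β) ^ 2 *
            expct N p (fun w => psiHalf N p (fun i => if w i then 1 else 0))) := by
  have hmain := PropAux.main_decomp N p hsum hpi Y1 Y0 β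
  constructor
  · rw [hmain]
    have h0 : 0 ≤ ∑ v : Fin N → Bool,
        p v * psiHalf N p (fun i => PropAux.sg N v i * PropAux.dvec N Y1 Y0 β i) :=
      Finset.sum_nonneg fun v _ => mul_nonneg (hp v) (PropAux.psi_nonneg N p hp _)
    linarith
  · intro hcard hhom
    rw [hmain]
    congr 1
    have hzero := PropAux.support_sum_zero N p hp hsum hpi hcard
    have hstep : ∀ v : Fin N → Bool,
        p v * psiHalf N p (fun i => PropAux.sg N v i * PropAux.dvec N Y1 Y0 β i)
          = (tauATE N Y1 Y0 - β) ^ 2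
            * (p v * psiHalf N p (fun i => if v i then (1:ℝ) else 0)) := by
      intro v
      have hd : (fun i => PropAux.sg N v i * PropAux.dvec N Y1 Y0 β i)
          = fun i => PropAux.sg N v i * ((tauATE N Y1 Y0 - β) / 2) := by
        funext i
        unfold PropAux.dvec
        rw [hhom i]
      rw [hd, PropAux.psi_chi N p hzero ((tauATE N Y1 Y0 - β) / 2) v]
      ring
    rw [Finset.sum_congr rfl fun v _ => hstep v, ← Finset.mul_sum]
    rfl
end
end

section
/- Let N ≥ 2 be even, let p be the completely randomized design with equal group sizes, let β ∈ ℝ, and let ĉ(w) be the β-imputed vector. If the treatment effects are homogeneous, Y_i(1) − Y_i(0) = τ for all i, then E[ψ(ĉ(W))] − Var(τ̂) = (τ − β)²/(N − 1). -/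
open Finset

noncomputable section

/-- Completely randomized design with equal group sizes. -/
def crd (N : ℕ) (w : Fin N → Bool) : ℝ :=
  if (Tset N w).card = N / 2 then (1 : ℝ) / (N.choose (N / 2)) else 0

namespace CRDaux

/-- Sign of assignment: `+1` if treated, `-1` if control. -/
def sg (N : ℕ) (w : Fin N → Bool) (i : Fin N) : ℝ := if w i then 1 else -1

/-- `lin x w = ∑ i, sg w i * x i`. -/
def lin (N : ℕ) (x : Fin N → ℝ) (w : Fin N → Bool) : ℝ := ∑ i, sg N w i * x i

/-- Second moment matrix. -/
def M (N : ℕ) (i j : Fin N) : ℝ :=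
  ∑ w : Fin N → Bool, crd N w * (sg N w i * sg N w j)

lemma diff_ite (N : ℕ) (w : Fin N → Bool) (x : Fin N → ℝ) :
    ((∑ i, if w i then x i else 0) - ∑ i, if w i then 0 else x i) = lin N x w := by
  rw [lin, ← Finset.sum_sub_distrib]
  refine Finset.sum_congr rfl fun i _ => ?_
  by_cases h : w i <;> simp [sg, h]

lemma card_Tset_le (N : ℕ) (w : Fin N → Bool) : (Tset N w).card ≤ N := by
  simpa using Finset.card_le_univ (Tset N w)

lemma card_half_count (N : ℕ) :
    (Finset.univ.filter fun w : Fin N → Bool => (Tset N w).card = N / 2).card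
      = N.choose (N / 2) := by
  have hpc : (Finset.powersetCard (N / 2) (Finset.univ : Finset (Fin N))).card
      = N.choose (N / 2) := by simp
  rw [← hpc]
  · refine Finset.card_bij (fun w _ => Tset N w) ?_ ?_ ?_
    · intro w hw
      simp only [Finset.mem_filter] at hw
      simp [Finset.mem_powersetCard, hw.2, Finset.subset_univ]
    · intro w₁ h₁ w₂ h₂ h
      funext i
      have := Finset.ext_iff.mp h i
      simp only [Tset, Finset.mem_filter, Finset.mem_univ, true_and] at this
      cases hh : w₁ i
      · cases hh2 : w₂ i
        · rfl
        · exact absurd (this.mpr hh2) (by simp [hh])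
      · exact (this.mp hh).symm
    · intro S hS
      simp only [Finset.mem_powersetCard] at hS
      refine ⟨fun i => decide (i ∈ S), ?_, ?_⟩
      · simp only [Finset.mem_filter, Finset.mem_univ, true_and]
        have : Tset N (fun i => decide (i ∈ S)) = S := by
          ext i; simp [Tset]
        rw [this]; exact hS.2
      · ext i; simp [Tset]
lemma sum_crd (N : ℕ) : ∑ w : Fin N → Bool, crd N w = 1 := by
  have hpos : 0 < N.choose (N / 2) := Nat.choose_pos (Nat.div_le_self N 2)
  unfold crd
  rw [← Finset.sum_filter, Finset.sum_const, card_half_count, nsmul_eq_mul]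
  field_simp

/-- permutation invariance of `crd`. -/
lemma crd_perm (N : ℕ) (e : Equiv.Perm (Fin N)) (w : Fin N → Bool) :
    crd N (w ∘ e) = crd N w := by
  have hcard : (Tset N (w ∘ e)).card = (Tset N w).card := by
    refine Finset.card_bij (fun i _ => e i) ?_ ?_ ?_
    · intro i hi
      simp only [Tset, Finset.mem_filter, Finset.mem_univ, true_and,
        Function.comp] at hi ⊢
      exact hi
    · intro i _ j _ h
      exact e.injective h
    · intro j hj
      refine ⟨e.symm j, ?_, by simp⟩
      simp only [Tset, Finset.mem_filter, Finset.mem_univ, true_and,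
        Function.comp, Equiv.apply_symm_apply] at hj ⊢
      exact hj
  simp [crd, hcard]

/-- complement invariance of `crd`. -/
lemma crd_not (N : ℕ) (hEven : 2 ∣ N) (w : Fin N → Bool) :
    crd N (fun i => !(w i)) = crd N w := by
  have hcard : (Tset N (fun i => !(w i))).card = N - (Tset N w).card := by
    have : (Tset N (fun i => !(w i))) = Finset.univ \ Tset N w := by
      ext i; simp [Tset]
    rw [this, Finset.card_sdiff_of_subset (Finset.subset_univ _)]
    simp
  have hle := card_Tset_le N w
  have hiff : (N - (Tset N w).card = N / 2) ↔ ((Tset N w).card = N / 2) := by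
    omega
  simp only [crd, hcard]
  rw [if_congr hiff rfl rfl]

lemma sum_sg_eq_zero (N : ℕ) (hEven : 2 ∣ N) (w : Fin N → Bool)
    (hw : crd N w ≠ 0) : ∑ i, sg N w i = 0 := by
  have hcard : (Tset N w).card = N / 2 := by
    by_contra h
    simp [crd, h] at hw
  have hsplit := Finset.sum_filter_add_sum_filter_not Finset.univ
    (fun i => w i = true) (sg N w)
  have h1 : ∑ i ∈ Finset.univ.filter (fun i => w i = true), sg N w i
      = ((Tset N w).card : ℝ) := by
    rw [Finset.sum_congr rfl (fun i hi => ?_), Finset.sum_const, nsmul_eq_mul, mul_one]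
    · rfl
    · simp only [Finset.mem_filter] at hi
      simp [sg, hi.2]
  have h2 : ∑ i ∈ Finset.univ.filter (fun i => ¬ w i = true), sg N w i
      = -(((Finset.univ.filter (fun i => ¬ w i = true)).card : ℝ)) := by
    rw [Finset.sum_congr rfl (fun i hi => ?_), Finset.sum_const, nsmul_eq_mul,
      mul_neg, mul_one]
    · simp only [Finset.mem_filter] at hi
      simp [sg, hi.2]
  have h3 : (Finset.univ.filter (fun i => ¬ w i = true)).card = N - N / 2 := by
    have := Finset.card_filter_add_card_filter_not
      (s := (Finset.univ : Finset (Fin N))) (p := fun i => w i = true)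
    have hT : (Finset.univ.filter (fun i => w i = true)).card = N / 2 := hcard
    simp only [Finset.card_univ, Fintype.card_fin] at this
    omega
  rw [← hsplit, h1, h2, h3, hcard]
  have h4 : N - N / 2 = N / 2 := by omega
  rw [h4]
  ring
/-- The equivalence `w ↦ w ∘ e`. -/
def compEquiv (N : ℕ) (e : Equiv.Perm (Fin N)) : (Fin N → Bool) ≃ (Fin N → Bool) where
  toFun w := w ∘ e
  invFun w := w ∘ e.symm
  left_inv w := by funext i; simp
  right_inv w := by funext i; simp

/-- The complement equivalence. -/
def notEquiv (N : ℕ) : (Fin N → Bool) ≃ (Fin N → Bool) where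
  toFun w i := !(w i)
  invFun w i := !(w i)
  left_inv w := by funext i; simp
  right_inv w := by funext i; simp

lemma moment1 (N : ℕ) (hEven : 2 ∣ N) (i : Fin N) :
    ∑ w : Fin N → Bool, crd N w * sg N w i = 0 := by
  have h := Equiv.sum_comp (notEquiv N)
    (fun w => crd N w * sg N w i)
  have h2 : ∀ w : Fin N → Bool,
      crd N (notEquiv N w) * sg N (notEquiv N w) i
        = -(crd N w * sg N w i) := by
    intro w
    have hs : sg N (notEquiv N w) i = -(sg N w i) := by
      by_cases hwi : w i <;> simp [sg, notEquiv, hwi]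
    have hc : crd N (notEquiv N w) = crd N w := crd_not N hEven w
    rw [hs, hc]
    ring
  rw [Finset.sum_congr rfl (fun w _ => h2 w), Finset.sum_neg_distrib] at h
  linarith

lemma M_diag (N : ℕ) (i : Fin N) : M N i i = 1 := by
  have : ∀ w : Fin N → Bool, crd N w * (sg N w i * sg N w i) = crd N w := by
    intro w
    have : sg N w i * sg N w i = 1 := by
      by_cases hwi : w i <;> simp [sg, hwi]
    rw [this, mul_one]
  rw [M, Finset.sum_congr rfl (fun w _ => this w), sum_crd]

lemma M_perm (N : ℕ) (e : Equiv.Perm (Fin N)) (i j : Fin N) :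
    M N (e i) (e j) = M N i j := by
  rw [M, M, ← Equiv.sum_comp (compEquiv N e)
    (fun w => crd N w * (sg N w i * sg N w j))]
  refine Finset.sum_congr rfl fun w _ => ?_
  have hc : crd N (compEquiv N e w) = crd N w := crd_perm N e w
  rw [hc]
  rfl
lemma exists_perm_pair (N : ℕ) {i j k l : Fin N} (hij : i ≠ j) (hkl : k ≠ l) :
    ∃ e : Equiv.Perm (Fin N), e i = k ∧ e j = l := by
  refine ⟨(Equiv.swap i k).trans (Equiv.swap (Equiv.swap i k j) l), ?_, ?_⟩
  · simp only [Equiv.trans_apply, Equiv.swap_apply_left]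
    rw [Equiv.swap_apply_of_ne_of_ne]
    · intro h
      have h2 := congrArg (Equiv.swap i k) h
      simp only [Equiv.swap_apply_right, Equiv.swap_apply_self] at h2
      exact hij h2
    · exact hkl
  · simp only [Equiv.trans_apply, Equiv.swap_apply_left]

lemma M_offdiag_eq (N : ℕ) {i j k l : Fin N} (hij : i ≠ j) (hkl : k ≠ l) :
    M N k l = M N i j := by
  obtain ⟨e, hei, hej⟩ := exists_perm_pair N hij hkl
  rw [← hei, ← hej, M_perm]

lemma sum_M_eq_zero (N : ℕ) (hEven : 2 ∣ N) :
    ∑ i : Fin N, ∑ j : Fin N, M N i j = 0 := by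
  simp only [M]
  have swap1 : ∀ i : Fin N,
      ∑ j : Fin N, ∑ w : Fin N → Bool, crd N w * (sg N w i * sg N w j)
        = ∑ w : Fin N → Bool, ∑ j : Fin N, crd N w * (sg N w i * sg N w j) :=
    fun i => Finset.sum_comm

  rw [Finset.sum_congr rfl (fun i _ => swap1 i), Finset.sum_comm]
  rw [Finset.sum_eq_zero]
  intro w _
  by_cases hw : crd N w = 0
  · simp [hw]
  · have hz := sum_sg_eq_zero N hEven w hw
    have : ∑ i : Fin N, ∑ j : Fin N, crd N w * (sg N w i * sg N w j)
        = crd N w * ((∑ i, sg N w i) * (∑ j, sg N w j)) := by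
      rw [Finset.sum_mul_sum, Finset.mul_sum]
      refine Finset.sum_congr rfl fun i _ => ?_
      rw [Finset.mul_sum]
    simp [this, hz]

lemma M_offdiag_val (N : ℕ) (hN : 2 ≤ N) (hEven : 2 ∣ N) {i j : Fin N}
    (hij : i ≠ j) : M N i j = -1 / ((N : ℝ) - 1) := by
  have hN1 : (1 : ℝ) ≤ (N : ℝ) - 1 := by
    have : (2 : ℝ) ≤ (N : ℝ) := by exact_mod_cast hN
    linarith
  have hNne : ((N : ℝ) - 1) ≠ 0 := by linarith
  have hrow : ∀ k : Fin N, ∑ l : Fin N, M N k l = 1 + ((N : ℝ) - 1) * M N i j := by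
    intro k
    rw [← Finset.add_sum_erase _ _ (Finset.mem_univ k), M_diag]
    congr 1
    rw [Finset.sum_congr rfl (fun l hl => ?_), Finset.sum_const, nsmul_eq_mul]
    · rw [Finset.card_erase_of_mem (Finset.mem_univ k), Finset.card_univ,
        Fintype.card_fin]
      have : ((N - 1 : ℕ) : ℝ) = (N : ℝ) - 1 := by
        have : 1 ≤ N := by omega
        push_cast [Nat.cast_sub this]
        ring
      rw [this]
    · have hlk : l ≠ k := Finset.ne_of_mem_erase hl
      exact M_offdiag_eq N hij (Ne.symm hlk)
  have hzero := sum_M_eq_zero N hEven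
  rw [Finset.sum_congr rfl (fun k _ => hrow k), Finset.sum_const, Finset.card_univ,
    Fintype.card_fin, nsmul_eq_mul] at hzero
  have hNpos : (0 : ℝ) < (N : ℝ) := by positivity
  have h2 : 1 + ((N : ℝ) - 1) * M N i j = 0 := by
    rcases mul_eq_zero.mp hzero with h | h
    · exact absurd h (ne_of_gt hNpos)
    · exact h
  field_simp
  linarith
lemma sum4_comm {α β : Type*} [Fintype α] [Fintype β] (f : α → α → β → β → ℝ) :
    ∑ w : α, ∑ v : α, ∑ i : β, ∑ j : β, f w v i j
      = ∑ i : β, ∑ j : β, ∑ w : α, ∑ v : α, f w v i j := by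
  have h1 : ∀ w : α, ∑ v : α, ∑ i : β, ∑ j : β, f w v i j
      = ∑ i : β, ∑ v : α, ∑ j : β, f w v i j := fun w => Finset.sum_comm
  rw [Finset.sum_congr rfl fun w _ => h1 w, Finset.sum_comm]
  refine Finset.sum_congr rfl fun i _ => ?_
  have h2 : ∀ w : α, ∑ v : α, ∑ j : β, f w v i j
      = ∑ j : β, ∑ v : α, f w v i j := fun w => Finset.sum_comm
  rw [Finset.sum_congr rfl fun w _ => h2 w, Finset.sum_comm]

lemma sum_qd_sq (N : ℕ) :
    ∑ w : Fin N → Bool, ∑ v : Fin N → Bool,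
        crd N w * crd N v * (∑ i, sg N v i * sg N w i) ^ 2
      = ∑ i : Fin N, ∑ j : Fin N, (M N i j) ^ 2 := by
  have hB : ∀ w v : Fin N → Bool,
      crd N w * crd N v * (∑ i, sg N v i * sg N w i) ^ 2
        = ∑ i : Fin N, ∑ j : Fin N,
            (crd N w * (sg N w i * sg N w j)) * (crd N v * (sg N v i * sg N v j)) := by
    intro w v
    rw [sq, Finset.sum_mul_sum, Finset.mul_sum]
    refine Finset.sum_congr rfl fun i _ => ?_
    rw [Finset.mul_sum]
    refine Finset.sum_congr rfl fun j _ => ?_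
    ring
  have hM : ∀ i j : Fin N, (M N i j) ^ 2
      = ∑ w : Fin N → Bool, ∑ v : Fin N → Bool,
          (crd N w * (sg N w i * sg N w j)) * (crd N v * (sg N v i * sg N v j)) := by
    intro i j
    rw [sq, M, Finset.sum_mul_sum]
  rw [Finset.sum_congr rfl fun w _ => Finset.sum_congr rfl fun v _ => hB w v,
    Finset.sum_congr rfl fun i _ => Finset.sum_congr rfl fun j _ => hM i j]
  exact sum4_comm _

lemma sum_M_sq (N : ℕ) (hN : 2 ≤ N) (hEven : 2 ∣ N) :
    ∑ i : Fin N, ∑ j : Fin N, (M N i j) ^ 2 = (N : ℝ) ^ 2 / ((N : ℝ) - 1) := by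
  have hN1 : (1 : ℝ) ≤ (N : ℝ) - 1 := by
    have : (2 : ℝ) ≤ (N : ℝ) := by exact_mod_cast hN
    linarith
  have hNne : ((N : ℝ) - 1) ≠ 0 := by linarith
  have hrow : ∀ k : Fin N, ∑ l : Fin N, (M N k l) ^ 2
      = 1 + ((N : ℝ) - 1) * (1 / ((N : ℝ) - 1) ^ 2) := by
    intro k
    rw [← Finset.add_sum_erase _ _ (Finset.mem_univ k), M_diag, one_pow]
    congr 1
    rw [Finset.sum_congr rfl (fun l hl => ?_), Finset.sum_const, nsmul_eq_mul]
    · rw [Finset.card_erase_of_mem (Finset.mem_univ k), Finset.card_univ,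
        Fintype.card_fin]
      have hc : ((N - 1 : ℕ) : ℝ) = (N : ℝ) - 1 := by
        have h1 : 1 ≤ N := by omega
        push_cast [Nat.cast_sub h1]
        ring
      rw [hc]
    · have hlk : l ≠ k := Finset.ne_of_mem_erase hl
      rw [M_offdiag_val N hN hEven (Ne.symm hlk)]
      rw [div_pow, neg_one_sq]
  rw [Finset.sum_congr rfl (fun k _ => hrow k), Finset.sum_const, Finset.card_univ,
    Fintype.card_fin, nsmul_eq_mul]
  field_simp
  ring
lemma cast_half (N : ℕ) (hEven : 2 ∣ N) : ((N / 2 : ℕ) : ℝ) = (N : ℝ) / 2 := by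
  have h : N / 2 * 2 = N := Nat.div_mul_cancel hEven
  have : ((N / 2 : ℕ) : ℝ) * 2 = (N : ℝ) := by exact_mod_cast congrArg Nat.cast h
  linarith

lemma card_of_ne (N : ℕ) (w : Fin N → Bool) (hw : crd N w ≠ 0) :
    (Tset N w).card = N / 2 := by
  by_contra h
  simp [crd, h] at hw

lemma qd_moment (N : ℕ) (hEven : 2 ∣ N) (v : Fin N → Bool) :
    ∑ w : Fin N → Bool, crd N w * (∑ i, sg N v i * sg N w i) = 0 := by
  have h1 : ∀ w : Fin N → Bool, crd N w * (∑ i, sg N v i * sg N w i)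
      = ∑ i, sg N v i * (crd N w * sg N w i) := by
    intro w
    rw [Finset.mul_sum]
    exact Finset.sum_congr rfl fun i _ => by ring
  rw [Finset.sum_congr rfl fun w _ => h1 w, Finset.sum_comm]
  refine Finset.sum_eq_zero fun i _ => ?_
  rw [← Finset.mul_sum, moment1 N hEven i, mul_zero]

lemma tauDM_support (N : ℕ) (hN : 2 ≤ N) (hEven : 2 ∣ N)
    (Y1 Y0 : Fin N → ℝ) (hhom : ∀ i, Y1 i - Y0 i = tauATE N Y1 Y0)
    (w : Fin N → Bool) (hw : crd N w ≠ 0) :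
    tauDM N Y1 Y0 w - tauATE N Y1 Y0 = (2 / (N : ℝ)) * lin N Y0 w := by
  have hcard := card_of_ne N w hw
  have hNpos : (0 : ℝ) < (N : ℝ) := by
    have : 0 < N := by omega
    exact_mod_cast this
  have hsum : ((∑ i, if w i then yObs N Y1 Y0 w i else 0)
      - ∑ i, if w i then 0 else yObs N Y1 Y0 w i)
      = (∑ i, if w i then tauATE N Y1 Y0 else 0) + lin N Y0 w := by
    rw [lin, ← Finset.sum_sub_distrib, ← Finset.sum_add_distrib]
    refine Finset.sum_congr rfl fun i _ => ?_
    by_cases h : w i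
    · simp only [yObs, sg, h, if_true]
      have := hhom i
      linarith
    · simp [yObs, sg, h]
  have hτ : (∑ i, if w i then tauATE N Y1 Y0 else 0)
      = ((N : ℝ) / 2) * tauATE N Y1 Y0 := by
    rw [← Finset.sum_filter, Finset.sum_const, nsmul_eq_mul]
    have : (Finset.univ.filter fun i => w i = true).card = N / 2 := hcard
    rw [this, cast_half N hEven]
  rw [tauDM, hsum, hτ]
  field_simp
  ring

lemma lin_cHat (N : ℕ) (hEven : 2 ∣ N)
    (Y1 Y0 : Fin N → ℝ) (β : ℝ) (hhom : ∀ i, Y1 i - Y0 i = tauATE N Y1 Y0)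
    (w v : Fin N → Bool) (hv : crd N v ≠ 0) :
    lin N (cHatBeta N Y1 Y0 β w) v
      = lin N Y0 v
        + ((tauATE N Y1 Y0 - β) / 2) * (∑ i, sg N v i * sg N w i) := by
  have hz := sum_sg_eq_zero N hEven v hv
  have hpt : ∀ i, sg N v i * cHatBeta N Y1 Y0 β w i
      = sg N v i * Y0 i + (tauATE N Y1 Y0 / 2) * sg N v i
        + ((tauATE N Y1 Y0 - β) / 2) * (sg N v i * sg N w i) := by
    intro i
    have hY1 : Y1 i = Y0 i + tauATE N Y1 Y0 := by
      have := hhom i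
      linarith
    by_cases h1 : w i <;> by_cases h2 : v i <;>
      simp [cHatBeta, sg, h1, h2, hY1] <;> ring
  rw [lin, Finset.sum_congr rfl fun i _ => hpt i, Finset.sum_add_distrib,
    Finset.sum_add_distrib, ← Finset.mul_sum, ← Finset.mul_sum, hz, mul_zero,
    add_zero, lin]
end CRDaux

open CRDaux in
/-- Bias of the `β`-imputation estimator under the CRD with equal group sizes and
homogeneous treatment effects: `E[ψ(ĉ(W))] − Var(τ̂) = (τ − β)²/(N − 1)`. -/
theorem crd_imputation_bias
    (N : ℕ) (hN : 2 ≤ N) (hEven : 2 ∣ N)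
    (Y1 Y0 : Fin N → ℝ) (β : ℝ)
    (hhom : ∀ i, Y1 i - Y0 i = tauATE N Y1 Y0) :
    expct N (crd N) (fun w => psiHalf N (crd N) (cHatBeta N Y1 Y0 β w))
        - varDM N (crd N) Y1 Y0
      = (tauATE N Y1 Y0 - β) ^ 2 / ((N : ℝ) - 1) := by
  have hNpos : (0 : ℝ) < (N : ℝ) := by
    have : 0 < N := by omega
    exact_mod_cast this
  have hN2 : (2 : ℝ) ≤ (N : ℝ) := by exact_mod_cast hN
  have hNne : (N : ℝ) ≠ 0 := ne_of_gt hNpos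
  have hN1ne : ((N : ℝ) - 1) ≠ 0 := by linarith
  have hvar : varDM N (crd N) Y1 Y0
      = ∑ v : Fin N → Bool, crd N v * ((2 / (N : ℝ)) * lin N Y0 v) ^ 2 := by
    rw [varDM, expct]
    refine Finset.sum_congr rfl fun v _ => ?_
    by_cases hv : crd N v = 0
    · simp [hv]
    · rw [tauDM_support N hN hEven Y1 Y0 hhom v hv]
  have hlhs : expct N (crd N) (fun w => psiHalf N (crd N) (cHatBeta N Y1 Y0 β w))
      = ∑ w : Fin N → Bool, ∑ v : Fin N → Bool,
          crd N w * (crd N v *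
            ((2 / (N : ℝ)) * (lin N Y0 v
              + ((tauATE N Y1 Y0 - β) / 2) * (∑ i, sg N v i * sg N w i))) ^ 2) := by
    rw [expct]
    refine Finset.sum_congr rfl fun w _ => ?_
    rw [psiHalf, Finset.mul_sum]
    refine Finset.sum_congr rfl fun v _ => ?_
    by_cases hv : crd N v = 0
    · simp [hv]
    · rw [diff_ite, lin_cHat N hEven Y1 Y0 β hhom w v hv]
  have hsplit : ∀ w v : Fin N → Bool,
      crd N w * (crd N v *
          ((2 / (N : ℝ)) * (lin N Y0 v
            + ((tauATE N Y1 Y0 - β) / 2) * (∑ i, sg N v i * sg N w i))) ^ 2)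
        = crd N w * (crd N v * ((2 / (N : ℝ)) * lin N Y0 v) ^ 2)
          + ((2 / (N : ℝ)) ^ 2 * (tauATE N Y1 Y0 - β) * (crd N v * lin N Y0 v))
              * (crd N w * (∑ i, sg N v i * sg N w i))
          + ((2 / (N : ℝ)) ^ 2 * ((tauATE N Y1 Y0 - β) ^ 2 / 4))
              * (crd N w * crd N v * (∑ i, sg N v i * sg N w i) ^ 2) := by
    intro w v
    ring
  have hS1 : ∑ w : Fin N → Bool, ∑ v : Fin N → Bool,
      crd N w * (crd N v * ((2 / (N : ℝ)) * lin N Y0 v) ^ 2)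
        = varDM N (crd N) Y1 Y0 := by
    have h1 : ∀ w : Fin N → Bool, ∑ v : Fin N → Bool,
        crd N w * (crd N v * ((2 / (N : ℝ)) * lin N Y0 v) ^ 2)
          = crd N w * varDM N (crd N) Y1 Y0 := by
      intro w
      rw [← Finset.mul_sum, ← hvar]
    rw [Finset.sum_congr rfl fun w _ => h1 w, ← Finset.sum_mul, sum_crd, one_mul]
  have hS2 : ∑ w : Fin N → Bool, ∑ v : Fin N → Bool,
      ((2 / (N : ℝ)) ^ 2 * (tauATE N Y1 Y0 - β) * (crd N v * lin N Y0 v))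
        * (crd N w * (∑ i, sg N v i * sg N w i)) = 0 := by
    rw [Finset.sum_comm]
    refine Finset.sum_eq_zero fun v _ => ?_
    rw [← Finset.mul_sum, qd_moment N hEven v, mul_zero]
  have hS3 : ∑ w : Fin N → Bool, ∑ v : Fin N → Bool,
      ((2 / (N : ℝ)) ^ 2 * ((tauATE N Y1 Y0 - β) ^ 2 / 4))
        * (crd N w * crd N v * (∑ i, sg N v i * sg N w i) ^ 2)
        = (tauATE N Y1 Y0 - β) ^ 2 / ((N : ℝ) - 1) := by
    have h1 : ∀ w : Fin N → Bool, ∑ v : Fin N → Bool,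
        ((2 / (N : ℝ)) ^ 2 * ((tauATE N Y1 Y0 - β) ^ 2 / 4))
          * (crd N w * crd N v * (∑ i, sg N v i * sg N w i) ^ 2)
        = ((2 / (N : ℝ)) ^ 2 * ((tauATE N Y1 Y0 - β) ^ 2 / 4))
          * ∑ v : Fin N → Bool, crd N w * crd N v * (∑ i, sg N v i * sg N w i) ^ 2 := by
      intro w
      rw [← Finset.mul_sum]
    rw [Finset.sum_congr rfl fun w _ => h1 w, ← Finset.mul_sum, sum_qd_sq N,
      sum_M_sq N hN hEven]
    field_simp
    ring
  rw [hlhs, Finset.sum_congr rfl fun w _ => Finset.sum_congr rfl fun v _ => hsplit w v]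
  simp only [Finset.sum_add_distrib]
  rw [hS1, hS2, hS3]
  ring
end
end

section
/- Let p be a design on N ≥ 2 units satisfying positivity, and set c_i = (1 − π_i)·Y_i(1) + π_i·Y_i(0). Then Var(τ̂) = ψ(c), where for x ∈ ℝ^N, ψ(x) = (1/N²)·Σ_w p_w·(Σ_{i : w_i = 1} x_i/π_i − Σ_{i : w_i = 0} x_i/(1 − π_i))². Moreover, ψ : ℝ^N → ℝ is convex. -/
/-!
Unit by unit, `w_i Y_i(1)/π_i − (1 − w_i) Y_i(0)/(1 − π_i) − (Y_i(1) − Y_i(0))` equals `c_i/π_i`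
if `w_i = 1` and `−c_i/(1 − π_i)` if `w_i = 0`, so `τ̂(w) − τ` is `1/N` times the linear
contrast of `c` whose square `ψ` averages. Convexity holds because `ψ` is a nonnegative
combination of squares of linear functionals.
-/

open Finset

noncomputable section

/-- `ψ(x) = (1/N²)·Σ_w p_w·(Σ_{w_i=1} x_i/π_i − Σ_{w_i=0} x_i/(1 − π_i))²`. -/
def psiGen (N : ℕ) (p : (Fin N → Bool) → ℝ) (x : Fin N → ℝ) : ℝ :=
  (1 / (N : ℝ) ^ 2) * ∑ w : Fin N → Bool, p w *
    ((∑ i, if w i then x i / piS N p i else 0)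
      - ∑ i, if w i then 0 else x i / (1 - piS N p i)) ^ 2

open Matrix

theorem convexOn_finset_sum {𝕜 E β ι : Type*} [Semiring 𝕜] [PartialOrder 𝕜] [AddCommMonoid E]
    [SMul 𝕜 E] [AddCommMonoid β] [PartialOrder β] [IsOrderedAddMonoid β] [Module 𝕜 β]
    {s : Set E} (hs : Convex 𝕜 s) (t : Finset ι) {f : ι → E → β}
    (hf : ∀ i ∈ t, ConvexOn 𝕜 s (f i)) : ConvexOn 𝕜 s fun x => ∑ i ∈ t, f i x := by
  classical
  induction t using Finset.cons_induction with
  | empty => simpa using convexOn_const 0 hs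
  | cons i t _ ih =>
    simp only [sum_cons]
    exact (hf i (mem_cons_self i t)).add (ih fun j hj => hf j (mem_cons_of_mem hj))

theorem convexOn_sum_mul_sq {E ι : Type*} [AddCommMonoid E] [Module ℝ E] (t : Finset ι)
    {c : ι → ℝ} (hc : ∀ i ∈ t, 0 ≤ c i) (ℓ : ι → E →ₗ[ℝ] ℝ) :
    ConvexOn ℝ Set.univ fun x => ∑ i ∈ t, c i * ℓ i x ^ 2 :=
  convexOn_finset_sum convex_univ t fun i hi =>
    ((Even.convexOn_pow (𝕜 := ℝ) even_two).comp_linearMap (ℓ i)).smul (hc i hi)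

theorem sub_ite_sub_eq_ite_inv_mul {π y₁ y₀ : ℝ} (h₀ : π ≠ 0) (h₁ : π ≠ 1) (b : Bool) :
    (if b then y₁ / π else 0) - (if b then 0 else y₀ / (1 - π)) - (y₁ - y₀) =
      (if b then π⁻¹ else -(1 - π)⁻¹) * ((1 - π) * y₁ + π * y₀) := by
  have h₁' : 1 - π ≠ 0 := sub_ne_zero.mpr h₁.symm
  cases b
  · simp only [Bool.false_eq_true, ↓reduceIte, zero_sub, neg_mul]
    field_simp
    ring
  · simp only [↓reduceIte, sub_zero]
    field_simp
    ring

def htWeight (N : ℕ) (p : (Fin N → Bool) → ℝ) (w : Fin N → Bool) (i : Fin N) : ℝ :=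
  if w i then (piS N p i)⁻¹ else -(1 - piS N p i)⁻¹

section HorvitzThompson

variable {N : ℕ} (p : (Fin N → Bool) → ℝ)

theorem psiGen_eq_sum_mul_dotProduct_sq (x : Fin N → ℝ) :
    psiGen N p x = (1 / (N : ℝ) ^ 2) * ∑ w, p w * (htWeight N p w ⬝ᵥ x) ^ 2 := by
  unfold psiGen
  congr 1
  refine sum_congr rfl fun w _ => ?_
  rw [dotProduct, ← sum_sub_distrib]
  congr 2
  refine sum_congr rfl fun i _ => ?_
  cases hwi : w i <;> simp [htWeight, hwi, div_eq_inv_mul]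

theorem convexOn_psiGen (hp : ∀ w, 0 ≤ p w) : ConvexOn ℝ Set.univ (psiGen N p) := by
  rw [funext (psiGen_eq_sum_mul_dotProduct_sq p)]
  exact (convexOn_sum_mul_sq univ (fun w _ => hp w)
    fun w => dotProductBilin ℝ ℝ (htWeight N p w)).smul (by positivity)

theorem tauHT_sub_tauATE (hπ : ∀ i, piS N p i ≠ 0 ∧ piS N p i ≠ 1) (Y1 Y0 : Fin N → ℝ)
    (w : Fin N → Bool) :
    tauHT N p Y1 Y0 w - tauATE N Y1 Y0 =
      (1 / (N : ℝ)) * (htWeight N p w ⬝ᵥ fun i => (1 - piS N p i) * Y1 i + piS N p i * Y0 i) := by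
  unfold tauHT tauATE
  rw [← mul_sub, ← mul_sub, dotProduct, ← sum_sub_distrib, ← sum_sub_distrib]
  congr 1
  refine sum_congr rfl fun i _ => ?_
  exact sub_ite_sub_eq_ite_inv_mul (hπ i).1 (hπ i).2 (w i)

theorem varHT_eq_psiGen (hπ : ∀ i, piS N p i ≠ 0 ∧ piS N p i ≠ 1) (Y1 Y0 : Fin N → ℝ) :
    varHT N p Y1 Y0 = psiGen N p fun i => (1 - piS N p i) * Y1 i + piS N p i * Y0 i := by
  rw [varHT, expct, psiGen_eq_sum_mul_dotProduct_sq, mul_sum]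
  refine sum_congr rfl fun w _ => ?_
  rw [tauHT_sub_tauATE p hπ]
  ring

end HorvitzThompson

theorem variance_as_psiGen_and_convexity_general
    (N : ℕ)
    (p : (Fin N → Bool) → ℝ) (hp : ∀ w, 0 ≤ p w)
    (hpos : ∀ i, 0 < piS N p i ∧ piS N p i < 1)
    (Y1 Y0 : Fin N → ℝ) :
    varHT N p Y1 Y0 =
        psiGen N p (fun i => (1 - piS N p i) * Y1 i + piS N p i * Y0 i) ∧
      ConvexOn ℝ Set.univ (psiGen N p) :=
  ⟨varHT_eq_psiGen p (fun i => ⟨(hpos i).1.ne', (hpos i).2.ne⟩) Y1 Y0, convexOn_psiGen p hp⟩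

/-- Proposition 7: for an arbitrary design satisfying positivity, `Var(τ̂) = ψ(c)`
with `c_i = (1 − π_i)·Y_i(1) + π_i·Y_i(0)`, and `ψ` is convex. -/
theorem variance_as_psiGen_and_convexity
    (N : ℕ) (hN : 2 ≤ N)
    (p : (Fin N → Bool) → ℝ) (hp : ∀ w, 0 ≤ p w)
    (hsum : ∑ w : Fin N → Bool, p w = 1)
    (hpos : ∀ i, 0 < piS N p i ∧ piS N p i < 1)
    (Y1 Y0 : Fin N → ℝ) :
    varHT N p Y1 Y0 =
        psiGen N p (fun i => (1 - piS N p i) * Y1 i + piS N p i * Y0 i) ∧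
      ConvexOn ℝ Set.univ (psiGen N p) :=
  variance_as_psiGen_and_convexity_general N p hp hpos Y1 Y0
end
end

section
/- Let p be a design on N units, fix i with 0 < π_i < 1, let γ_i : {0,1}^N → ℝ be an arbitrary (possibly random, i.e., assignment-dependent) quantity, and let ĉ_i be the linear imputation estimator built from γ_i. Then E[ĉ_i(W)] − c_i = π_i·(1 − π_i)·( E[γ_i(W) | W_i = 0] − E[γ_i(W) | W_i = 1] ), where c_i = (1 − π_i)·Y_i(1) + π_i·Y_i(0). In particular, ĉ_i is unbiased for c_i if and only if E[γ_i(W) | W_i = 0] = E[γ_i(W) | W_i = 1]. -/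
open Finset

noncomputable section

/-- Conditional expectation `E[f(W) | W_i = k]`. -/
def condE (N : ℕ) (p : (Fin N → Bool) → ℝ) (i : Fin N) (k : Bool)
    (f : (Fin N → Bool) → ℝ) : ℝ :=
  (∑ w : Fin N → Bool, if w i = k then p w * f w else 0) /
    (∑ w : Fin N → Bool, if w i = k then p w else 0)

/-- The linear imputation estimator of `c_i = (1 − π_i)·Y_i(1) + π_i·Y_i(0)` built
from `γ_i`. -/
def cHatLin (N : ℕ) (p : (Fin N → Bool) → ℝ) (Y1 Y0 : Fin N → ℝ) (i : Fin N)
    (γ : (Fin N → Bool) → ℝ) (w : Fin N → Bool) : ℝ :=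
  if w i then
    ((1 - piS N p i) / piS N p i) * yObs N Y1 Y0 w i - (1 - piS N p i) * γ w
  else
    (piS N p i / (1 - piS N p i)) * yObs N Y1 Y0 w i + piS N p i * γ w

/-- Proposition 8: the bias of `ĉ_i` is
`π_i(1 − π_i)·(E[γ_i | W_i = 0] − E[γ_i | W_i = 1])`; in particular, `ĉ_i` is
unbiased for `c_i` iff `E[γ_i | W_i = 0] = E[γ_i | W_i = 1]`. -/
theorem linear_imputation_bias
    (N : ℕ)
    (p : (Fin N → Bool) → ℝ) (hp : ∀ w, 0 ≤ p w)
    (hsum : ∑ w : Fin N → Bool, p w = 1)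
    (i : Fin N) (hpi : 0 < piS N p i ∧ piS N p i < 1)
    (Y1 Y0 : Fin N → ℝ) (γ : (Fin N → Bool) → ℝ) :
    expct N p (cHatLin N p Y1 Y0 i γ)
        - ((1 - piS N p i) * Y1 i + piS N p i * Y0 i)
      = piS N p i * (1 - piS N p i) * (condE N p i false γ - condE N p i true γ) ∧
    (expct N p (cHatLin N p Y1 Y0 i γ)
        = (1 - piS N p i) * Y1 i + piS N p i * Y0 i
      ↔ condE N p i false γ = condE N p i true γ) := by
  obtain ⟨h0, h1⟩ := hpi
  have hne : piS N p i ≠ 0 := ne_of_gt h0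
  have hne1 : (1 : ℝ) - piS N p i ≠ 0 := by linarith
  have hπt : (∑ w : Fin N → Bool, if w i = true then p w else 0) = piS N p i := by
    simp [piS]
  have hπf : (∑ w : Fin N → Bool, if w i = false then p w else 0) = 1 - piS N p i := by
    have h : (∑ w : Fin N → Bool, if w i = true then p w else 0)
         + (∑ w : Fin N → Bool, if w i = false then p w else 0) = 1 := by
      rw [← Finset.sum_add_distrib, ← hsum]
      apply Finset.sum_congr rfl
      intro w _
      by_cases h : w i <;> simp [h]
    linarith [hπt]
  set A := ∑ w : Fin N → Bool, if w i = true then p w * γ w else 0 with hA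
  set B := ∑ w : Fin N → Bool, if w i = false then p w * γ w else 0 with hB
  have hE : expct N p (cHatLin N p Y1 Y0 i γ)
      = ((1 - piS N p i)/piS N p i * Y1 i) * piS N p i - (1 - piS N p i) * A
        + ((piS N p i/(1 - piS N p i)) * Y0 i) * (1 - piS N p i) + piS N p i * B := by
    rw [expct]
    have key : ∀ w : Fin N → Bool, p w * cHatLin N p Y1 Y0 i γ w
        = ((1 - piS N p i)/piS N p i * Y1 i) * (if w i = true then p w else 0)
          - (1 - piS N p i) * (if w i = true then p w * γ w else 0)
          + ((piS N p i/(1 - piS N p i)) * Y0 i) * (if w i = false then p w else 0)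
          + piS N p i * (if w i = false then p w * γ w else 0) := by
      intro w
      by_cases h : w i <;> simp [cHatLin, yObs, h] <;> ring
    rw [Finset.sum_congr rfl (fun w _ => key w)]
    rw [Finset.sum_add_distrib, Finset.sum_add_distrib, Finset.sum_sub_distrib,
      ← Finset.mul_sum, ← Finset.mul_sum, ← Finset.mul_sum, ← Finset.mul_sum,
      hπt, hπf, hA, hB]
  have hcf : condE N p i false γ = B / (1 - piS N p i) := by
    rw [condE, hπf]
  have hct : condE N p i true γ = A / piS N p i := by
    rw [condE, hπt]
  have main : expct N p (cHatLin N p Y1 Y0 i γ)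
        - ((1 - piS N p i) * Y1 i + piS N p i * Y0 i)
      = piS N p i * (1 - piS N p i) * (condE N p i false γ - condE N p i true γ) := by
    rw [hE, hcf, hct]
    field_simp
    ring
  refine ⟨main, ?_⟩
  constructor
  · intro h
    rw [h] at main
    have h2 : piS N p i * (1 - piS N p i)
        * (condE N p i false γ - condE N p i true γ) = 0 := by linarith
    rcases mul_eq_zero.mp h2 with h3 | h3
    · exact absurd h3 (mul_ne_zero hne hne1)
    · linarith
  · intro h
    rw [h] at main
    simp at main
    linarith
end
end

section
/- Let p be a design on N ≥ 2 units satisfying positivity, fix a unit i, and assume that for every j ≠ i and every u ∈ {0,1}, 0 < Pr(W_j = 1 | W_i = u) < 1. For an assignment w let π̃_j(w) = Pr(W_j = 1 | W_i = w_i) and define the jackknifed estimator θ̂_{(−i)}(w) = (1/(N−1))·Σ_{j ≠ i} [ w_j·y_j(w)·(1 − π_j)/(π̃_j(w)·π_j) − (1 − w_j)·y_j(w)·π_j/((1 − π̃_j(w))·(1 − π_j)) ]. Then E[θ̂_{(−i)}(W) | W_i = 1] = E[θ̂_{(−i)}(W) | W_i = 0] = (1/(N−1))·Σ_{j ≠ i}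 ( ((1 − π_j)/π_j)·Y_j(1) − (π_j/(1 − π_j))·Y_j(0) ), and consequently the linear imputation estimator ĉ_i built from γ_i = θ̂_{(−i)} satisfies E[ĉ_i(W)] = c_i = (1 − π_i)·Y_i(1) + π_i·Y_i(0). -/
open Finset

noncomputable section

/-- Conditional treatment probability `π̃_j = Pr(W_j = 1 | W_i = u)`. -/
def condPi (N : ℕ) (p : (Fin N → Bool) → ℝ) (i : Fin N) (u : Bool) (j : Fin N) : ℝ :=
  (∑ w : Fin N → Bool, if w i = u ∧ w j = true then p w else 0) /
    (∑ w : Fin N → Bool, if w i = u then p w else 0)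

/-- The jackknifed estimator `θ̂_{(−i)}(w)` which leaves out unit `i` and reweights
according to `π̃_j(w) = Pr(W_j = 1 | W_i = w_i)`. -/
def thetaJack (N : ℕ) (p : (Fin N → Bool) → ℝ) (Y1 Y0 : Fin N → ℝ) (i : Fin N)
    (w : Fin N → Bool) : ℝ :=
  (1 / ((N : ℝ) - 1)) * ∑ j ∈ univ.erase i,
    ((if w j then
        yObs N Y1 Y0 w j * (1 - piS N p j) / (condPi N p i (w i) j * piS N p j)
      else 0)
      - (if w j then 0 else
          yObs N Y1 Y0 w j * piS N p j / ((1 - condPi N p i (w i) j) * (1 - piS N p j))))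

lemma sum_if_split (N : ℕ) (p : (Fin N → Bool) → ℝ) (i j : Fin N) (u : Bool) :
    (∑ w : Fin N → Bool, if w i = u then p w else 0)
      = (∑ w : Fin N → Bool, if w i = u ∧ w j = true then p w else 0)
        + (∑ w : Fin N → Bool, if w i = u ∧ w j = false then p w else 0) := by
  rw [← Finset.sum_add_distrib]
  refine Finset.sum_congr rfl fun w _ => ?_
  by_cases h : w i = u <;> cases hj : w j <;> simp [h, hj]

lemma piS_compl (N : ℕ) (p : (Fin N → Bool) → ℝ)
    (hsum : ∑ w : Fin N → Bool, p w = 1) (i : Fin N) :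
    (∑ w : Fin N → Bool, if w i = false then p w else 0) = 1 - piS N p i := by
  have h : (∑ w : Fin N → Bool, if w i = true then p w else 0)
      + (∑ w : Fin N → Bool, if w i = false then p w else 0) = 1 := by
    rw [← Finset.sum_add_distrib, ← hsum]
    refine Finset.sum_congr rfl fun w _ => ?_
    cases h : w i <;> simp [h]
  have h2 : piS N p i = ∑ w : Fin N → Bool, if w i = true then p w else 0 := by
    unfold piS; simp
  linarith [h2 ▸ h]

lemma Pu_pos (N : ℕ) (p : (Fin N → Bool) → ℝ)
    (hsum : ∑ w : Fin N → Bool, p w = 1)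
    (hpos : ∀ k, 0 < piS N p k ∧ piS N p k < 1) (i : Fin N) (u : Bool) :
    0 < ∑ w : Fin N → Bool, if w i = u then p w else 0 := by
  cases u
  · rw [piS_compl N p hsum i]; linarith [(hpos i).2]
  · have h2 : piS N p i = ∑ w : Fin N → Bool, if w i = true then p w else 0 := by
      unfold piS; simp
    rw [← h2]; exact (hpos i).1

lemma condE_theta (N : ℕ) (p : (Fin N → Bool) → ℝ)
    (hsum : ∑ w : Fin N → Bool, p w = 1)
    (hpos : ∀ k, 0 < piS N p k ∧ piS N p k < 1)
    (i : Fin N)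
    (hcond : ∀ j ∈ univ.erase i, ∀ u : Bool,
      0 < condPi N p i u j ∧ condPi N p i u j < 1)
    (Y1 Y0 : Fin N → ℝ) (u : Bool) :
    condE N p i u (thetaJack N p Y1 Y0 i)
      = (1 / ((N : ℝ) - 1)) * ∑ j ∈ univ.erase i,
          (((1 - piS N p j) / piS N p j) * Y1 j - (piS N p j / (1 - piS N p j)) * Y0 j) := by
  have hPu : 0 < ∑ w : Fin N → Bool, if w i = u then p w else 0 :=
    Pu_pos N p hsum hpos i u
  set T : Fin N → (Fin N → Bool) → ℝ := fun j w =>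
    ((if w j then
        yObs N Y1 Y0 w j * (1 - piS N p j) / (condPi N p i (w i) j * piS N p j)
      else 0)
      - (if w j then 0 else
          yObs N Y1 Y0 w j * piS N p j / ((1 - condPi N p i (w i) j) * (1 - piS N p j))))
    with hT
  have step1 : (∑ w : Fin N → Bool, if w i = u then p w * thetaJack N p Y1 Y0 i w else 0)
      = (1 / ((N : ℝ) - 1)) * ∑ j ∈ univ.erase i,
          ∑ w : Fin N → Bool, (if w i = u then p w * T j w else 0) := by
    rw [show (∑ j ∈ univ.erase i, ∑ w : Fin N → Bool, (if w i = u then p w * T j w else 0))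
        = ∑ w : Fin N → Bool, ∑ j ∈ univ.erase i, (if w i = u then p w * T j w else 0)
      from Finset.sum_comm, Finset.mul_sum]
    refine Finset.sum_congr rfl fun w _ => ?_
    by_cases h : w i = u
    · simp only [if_pos h]
      rw [show thetaJack N p Y1 Y0 i w
          = (1 / ((N : ℝ) - 1)) * ∑ j ∈ univ.erase i, T j w from rfl,
        mul_left_comm, Finset.mul_sum]
    · simp [h]
  have step2 : ∀ j ∈ univ.erase i,
      (∑ w : Fin N → Bool, (if w i = u then p w * T j w else 0))
        = (∑ w : Fin N → Bool, if w i = u then p w else 0)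
            * (((1 - piS N p j) / piS N p j) * Y1 j
            - (piS N p j / (1 - piS N p j)) * Y0 j) := by
    intro j hj
    have hc0 : 0 < condPi N p i u j := (hcond j hj u).1
    have hc1 : condPi N p i u j < 1 := (hcond j hj u).2
    have hpj0 : 0 < piS N p j := (hpos j).1
    have hpj1 : piS N p j < 1 := (hpos j).2
    have hS1 : (∑ w : Fin N → Bool, if w i = u ∧ w j = true then p w else 0)
        = condPi N p i u j * (∑ w : Fin N → Bool, if w i = u then p w else 0) := by
      unfold condPi
      rw [div_mul_cancel₀ _ (ne_of_gt hPu)]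
    have hS0 : (∑ w : Fin N → Bool, if w i = u ∧ w j = false then p w else 0)
        = (1 - condPi N p i u j) * (∑ w : Fin N → Bool, if w i = u then p w else 0) := by
      have h2 := sum_if_split N p i j u
      rw [hS1] at h2
      linarith
    have hsplit : (∑ w : Fin N → Bool, (if w i = u then p w * T j w else 0))
        = (Y1 j * (1 - piS N p j) / (condPi N p i u j * piS N p j))
            * (∑ w : Fin N → Bool, if w i = u ∧ w j = true then p w else 0)
          + (-(Y0 j * piS N p j / ((1 - condPi N p i u j) * (1 - piS N p j))))
            * (∑ w : Fin N → Bool, if w i = u ∧ w j = false then p w else 0) := by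
      rw [Finset.mul_sum, Finset.mul_sum, ← Finset.sum_add_distrib]
      refine Finset.sum_congr rfl fun w _ => ?_
      by_cases hi2 : w i = u
      · cases hjw : w j
        · simp only [hT, yObs, hi2, hjw, Bool.false_eq_true, if_false, if_true,
            and_true, and_false, if_pos rfl]
          ring
        · simp only [hT, yObs, hi2, hjw, if_true, and_true, and_false,
            Bool.true_eq_false, if_false, if_pos rfl]
          ring
      · simp [hi2]
    rw [hsplit, hS1, hS0]
    have h1 : condPi N p i u j ≠ 0 := ne_of_gt hc0
    have h2 : (1 : ℝ) - condPi N p i u j ≠ 0 := by linarith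
    have h3 : piS N p j ≠ 0 := ne_of_gt hpj0
    have h4 : (1 : ℝ) - piS N p j ≠ 0 := by linarith
    field_simp
    ring
  rw [condE, step1, Finset.sum_congr rfl step2, ← Finset.mul_sum, mul_left_comm]
  exact mul_div_cancel_left₀ _ (ne_of_gt hPu)

/-- Proposition 9: the jackknifed estimator `θ̂_{(−i)}` has the same conditional
expectation given `W_i = 1` and `W_i = 0`, and the resulting linear imputation
estimator is unbiased for `c_i`. -/
theorem jackknife_theta_unbiased
    (N : ℕ) (hN : 2 ≤ N)
    (p : (Fin N → Bool) → ℝ) (hp : ∀ w, 0 ≤ p w)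
    (hsum : ∑ w : Fin N → Bool, p w = 1)
    (hpos : ∀ i, 0 < piS N p i ∧ piS N p i < 1)
    (i : Fin N)
    (hcond : ∀ j ∈ univ.erase i, ∀ u : Bool,
      0 < condPi N p i u j ∧ condPi N p i u j < 1)
    (Y1 Y0 : Fin N → ℝ) :
    condE N p i true (thetaJack N p Y1 Y0 i)
        = (1 / ((N : ℝ) - 1)) * ∑ j ∈ univ.erase i,
            (((1 - piS N p j) / piS N p j) * Y1 j - (piS N p j / (1 - piS N p j)) * Y0 j) ∧
      condE N p i false (thetaJack N p Y1 Y0 i)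
        = (1 / ((N : ℝ) - 1)) * ∑ j ∈ univ.erase i,
            (((1 - piS N p j) / piS N p j) * Y1 j - (piS N p j / (1 - piS N p j)) * Y0 j) ∧
      expct N p (cHatLin N p Y1 Y0 i (thetaJack N p Y1 Y0 i))
        = (1 - piS N p i) * Y1 i + piS N p i * Y0 i := by

  have hπ0 : 0 < piS N p i := (hpos i).1
  have hπ1 : piS N p i < 1 := (hpos i).2
  have h1 := condE_theta N p hsum hpos i hcond Y1 Y0 true
  have h0 := condE_theta N p hsum hpos i hcond Y1 Y0 false
  refine ⟨h1, h0, ?_⟩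
  set θ := (1 / ((N : ℝ) - 1)) * ∑ j ∈ univ.erase i,
      (((1 - piS N p j) / piS N p j) * Y1 j - (piS N p j / (1 - piS N p j)) * Y0 j) with hθ
  have hPt : (∑ w : Fin N → Bool, if w i = true then p w else 0) = piS N p i := by
    unfold piS; simp
  have hPf : (∑ w : Fin N → Bool, if w i = false then p w else 0) = 1 - piS N p i :=
    piS_compl N p hsum i
  have hNt : (∑ w : Fin N → Bool,
      if w i = true then p w * thetaJack N p Y1 Y0 i w else 0) = θ * piS N p i := by
    rw [condE, hPt] at h1
    rw [div_eq_iff (ne_of_gt hπ0)] at h1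
    rw [h1]
  have hNf : (∑ w : Fin N → Bool,
      if w i = false then p w * thetaJack N p Y1 Y0 i w else 0) = θ * (1 - piS N p i) := by
    rw [condE, hPf] at h0
    rw [div_eq_iff (by linarith : (1 : ℝ) - piS N p i ≠ 0)] at h0
    rw [h0]
  have hsplitE : expct N p (cHatLin N p Y1 Y0 i (thetaJack N p Y1 Y0 i))
      = (∑ w : Fin N → Bool,
          if w i = true then p w * cHatLin N p Y1 Y0 i (thetaJack N p Y1 Y0 i) w else 0)
        + (∑ w : Fin N → Bool,
          if w i = false then p w * cHatLin N p Y1 Y0 i (thetaJack N p Y1 Y0 i) w else 0) := by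
    unfold expct
    rw [← Finset.sum_add_distrib]
    refine Finset.sum_congr rfl fun w _ => ?_
    cases h : w i <;> simp [h]
  have hTrue : (∑ w : Fin N → Bool,
      if w i = true then p w * cHatLin N p Y1 Y0 i (thetaJack N p Y1 Y0 i) w else 0)
      = ((1 - piS N p i) / piS N p i * Y1 i)
          * (∑ w : Fin N → Bool, if w i = true then p w else 0)
        - (1 - piS N p i) * (∑ w : Fin N → Bool,
            if w i = true then p w * thetaJack N p Y1 Y0 i w else 0) := by
    rw [Finset.mul_sum, Finset.mul_sum, ← Finset.sum_sub_distrib]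
    refine Finset.sum_congr rfl fun w _ => ?_
    cases h : w i
    · simp [h]
    · simp only [cHatLin, yObs, h, if_true]
      ring
  have hFalse : (∑ w : Fin N → Bool,
      if w i = false then p w * cHatLin N p Y1 Y0 i (thetaJack N p Y1 Y0 i) w else 0)
      = (piS N p i / (1 - piS N p i) * Y0 i)
          * (∑ w : Fin N → Bool, if w i = false then p w else 0)
        + piS N p i * (∑ w : Fin N → Bool,
            if w i = false then p w * thetaJack N p Y1 Y0 i w else 0) := by
    rw [Finset.mul_sum, Finset.mul_sum, ← Finset.sum_add_distrib]
    refine Finset.sum_congr rfl fun w _ => ?_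
    cases h : w i
    · simp only [cHatLin, yObs, h, Bool.false_eq_true, if_false, if_pos rfl, if_true]
      ring
    · simp [h]
  rw [hsplitE, hTrue, hFalse, hPt, hPf, hNt, hNf]
  have hne0 : piS N p i ≠ 0 := ne_of_gt hπ0
  have hne1 : (1 : ℝ) - piS N p i ≠ 0 := by linarith
  field_simp
  ring
end
end

section
/- Let N ≥ 4 be even and let p be the completely randomized design with equal group sizes. For each unit i and assignment w define θ̂_{(−i)}(w) = (1/(N/2 − 1))·Σ_{j ≠ i} w_j·y_j(w) − (2/N)·Σ_{j ≠ i} (1 − w_j)·y_j(w) if w_i = 1, and θ̂_{(−i)}(w) = (2/N)·Σ_{j ≠ i} w_j·y_j(w) − (1/(N/2 − 1))·Σ_{j ≠ i} (1 − w_j)·y_j(w) if w_i = 0; set ĉ_i(w) = y_i(w) + (1/2 − w_i)·θ̂_{(−i)}(w) and V̂_Jack(W) = ψ(ĉ(W)). If the treatment effects are homogeneous, Y_i(1) − Y_i(0) = τ for all i, then E[V̂_Jack(W)] = ((N−1)/(N−2))·Var(τ̂). -/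
open Finset

noncomputable section

/-- The leave-one-out (jackknifed) difference-in-means estimator under the CRD with
equal group sizes, with inverse weights adjusted by the treatment status of unit `i`. -/
def thetaJackCRD (N : ℕ) (Y1 Y0 : Fin N → ℝ) (i : Fin N) (w : Fin N → Bool) : ℝ :=
  if w i then
    (1 / ((N : ℝ) / 2 - 1)) * (∑ j ∈ univ.erase i, if w j then yObs N Y1 Y0 w j else 0)
      - (2 / (N : ℝ)) * (∑ j ∈ univ.erase i, if w j then 0 else yObs N Y1 Y0 w j)
  else
    (2 / (N : ℝ)) * (∑ j ∈ univ.erase i, if w j then yObs N Y1 Y0 w j else 0)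
      - (1 / ((N : ℝ) / 2 - 1)) * (∑ j ∈ univ.erase i, if w j then 0 else yObs N Y1 Y0 w j)

/-- The jackknife direct-imputation variance estimator
`V̂_Jack(W) = ψ(ĉ(W))` with `ĉ_i(W) = y_i(W) + (1/2 − W_i)·θ̂_{(−i)}(W)`. -/
def VJack (N : ℕ) (Y1 Y0 : Fin N → ℝ) (W : Fin N → Bool) : ℝ :=
  psiHalf N (crd N)
    (fun i => yObs N Y1 Y0 W i
      + (1 / 2 - (if W i then (1 : ℝ) else 0)) * thetaJackCRD N Y1 Y0 i W)


/-!
Write `s_i = ±1` for the treatment sign of unit `i`. Under the balanced design `Σ s_i = 0`, and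
permuting units preserves the design, so `E[s_i s_j] = -1/(N-1)` for `i ≠ j`; hence
`E[(Σ s_i x_i)²] = scatter x / (N-1)`, which evaluates both `ψ` and
`Var τ̂ = E[((2/N) Σ s_i Y_i(0))²]`. With homogeneous effects the jackknife imputation is
`ĉ = λ (Y(0) - s (s·Y(0))/N) + const` with `λ = (N-1)/(N-2)`, so that
`scatter ĉ = λ² (scatter Y(0) - (s·Y(0))²)`. Taking expectations, the factor `1 - 1/(N-1)`
combines with `λ²` into `λ`.
-/

def spin {ι : Type*} (w : ι → Bool) (i : ι) : ℝ := if w i then 1 else -1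

section Spin

variable {ι : Type*} (w : ι → Bool)

lemma spin_mul_self (i : ι) : spin w i * spin w i = 1 := by
  unfold spin; split_ifs <;> norm_num

lemma sum_ite_sub_sum_ite_eq_sum_spin_mul [Fintype ι] (x : ι → ℝ) :
    ((∑ i, if w i then x i else 0) - ∑ i, if w i then 0 else x i) = ∑ i, spin w i * x i := by
  rw [← Finset.sum_sub_distrib]
  refine Finset.sum_congr rfl fun i _ => ?_
  unfold spin; split_ifs <;> ring

end Spin

lemma card_Tset_eq_sum_ite {N : ℕ} (w : Fin N → Bool) :
    ((Tset N w).card : ℝ) = ∑ i, if w i then (1 : ℝ) else 0 := by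
  simp [Tset, Finset.sum_boole]

lemma sum_spin_eq_zero {N : ℕ} (hEven : 2 ∣ N) {w : Fin N → Bool}
    (hw : (Tset N w).card = N / 2) : ∑ i, spin w i = 0 := by
  have hcard : ∑ i, (if w i then (1 : ℝ) else 0) = N / 2 := by
    rw [← card_Tset_eq_sum_ite, hw, Nat.cast_div hEven two_ne_zero, Nat.cast_ofNat]
  have hspin : ∀ i, spin w i = 2 * (if w i then (1 : ℝ) else 0) - 1 := by
    intro i; unfold spin; split_ifs <;> norm_num
  simp only [hspin, Finset.sum_sub_distrib, ← Finset.mul_sum, hcard, Finset.sum_const,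
    Finset.card_univ, Fintype.card_fin, nsmul_eq_mul, mul_one]
  ring

lemma card_filter_card_Tset_eq (N m : ℕ) :
    (univ.filter fun w : Fin N → Bool => (Tset N w).card = m).card = N.choose m := by
  rw [show N.choose m = (powersetCard m (univ : Finset (Fin N))).card by simp]
  refine Finset.card_nbij' (Tset N) (fun s j => decide (j ∈ s)) ?_ ?_ ?_ ?_
  · intro w hw
    simpa using hw
  · intro s hs
    simp only [Finset.mem_coe, Finset.mem_powersetCard] at hs
    rw [Finset.mem_coe, Finset.mem_filter, ← hs.2]
    refine ⟨Finset.mem_univ _, congrArg Finset.card ?_⟩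
    ext j
    simp [Tset]
  · intro w _
    funext j
    simp [Tset]
  · intro s _
    ext j
    simp [Tset]

lemma sum_crd (N : ℕ) : ∑ w : Fin N → Bool, crd N w = 1 := by
  have hchoose : (N.choose (N / 2) : ℝ) ≠ 0 := by
    exact_mod_cast (Nat.choose_pos (Nat.div_le_self N 2)).ne'
  simp only [crd, ← Finset.sum_filter, Finset.sum_const, card_filter_card_Tset_eq,
    nsmul_eq_mul]
  field_simp

lemma sum_crd_mul_congr {N : ℕ} {f g : (Fin N → Bool) → ℝ}
    (h : ∀ w, (Tset N w).card = N / 2 → f w = g w) :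
    ∑ w, crd N w * f w = ∑ w, crd N w * g w := by
  refine Finset.sum_congr rfl fun w _ => ?_
  by_cases hw : (Tset N w).card = N / 2
  · rw [h w hw]
  · simp [crd, hw]

lemma crd_comp_perm {N : ℕ} (σ : Equiv.Perm (Fin N)) (w : Fin N → Bool) :
    crd N (w ∘ σ) = crd N w := by
  have : Tset N (w ∘ σ) = (Tset N w).map σ.symm.toEmbedding := by
    ext i; simp [Tset]
  rw [crd, crd, this, Finset.card_map]

lemma sum_crd_mul_comp_perm {N : ℕ} (σ : Equiv.Perm (Fin N)) (f : (Fin N → Bool) → ℝ) :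
    ∑ w, crd N w * f (w ∘ σ) = ∑ w, crd N w * f w :=
  Fintype.sum_bijective (· ∘ σ) σ.bijective.comp_right _ _ fun w => by rw [crd_comp_perm]

lemma sum_crd_mul_spin_mul_spin_of_ne {N : ℕ} (hEven : 2 ∣ N) {i j : Fin N} (hij : i ≠ j) :
    ∑ w, crd N w * (spin w i * spin w j) = -1 / ((N : ℝ) - 1) := by
  set c : Fin N → ℝ := fun k => ∑ w, crd N w * (spin w i * spin w k) with hc
  have hexch : ∀ k ∈ univ.erase i, c k = c j := by
    intro k hk
    have hki : k ≠ i := Finset.ne_of_mem_erase hk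
    have hσ := sum_crd_mul_comp_perm (Equiv.swap j k) fun w => spin w i * spin w j
    simp only [spin, Function.comp_apply, Equiv.swap_apply_of_ne_of_ne hij hki.symm,
      Equiv.swap_apply_left] at hσ
    simpa only [hc, spin] using hσ
  have hsum : ∑ k ∈ univ.erase i, c k = -1 := by
    calc ∑ k ∈ univ.erase i, c k
        = ∑ w, crd N w * (spin w i * ∑ k ∈ univ.erase i, spin w k) := by
          simp only [hc, Finset.mul_sum]
          exact Finset.sum_comm
      _ = ∑ w, crd N w * (-1) := sum_crd_mul_congr fun w hw => by
          rw [Finset.sum_erase_eq_sub (Finset.mem_univ i), sum_spin_eq_zero hEven hw, zero_sub,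
            mul_neg, spin_mul_self]
      _ = -1 := by rw [← Finset.sum_mul, sum_crd, one_mul]
  rw [Finset.sum_congr rfl hexch, Finset.sum_const, Finset.card_erase_of_mem (Finset.mem_univ i),
    Finset.card_univ, Fintype.card_fin, nsmul_eq_mul,
    Nat.cast_sub (Fin.pos i), Nat.cast_one] at hsum
  rw [eq_div_iff fun h => by simp [h] at hsum]
  linarith

/-- `N · Σ (x i - x̄)²`, written without the mean `x̄`. -/
def scatter {ι : Type*} [Fintype ι] (x : ι → ℝ) : ℝ :=
  Fintype.card ι * ∑ i, x i ^ 2 - (∑ i, x i) ^ 2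

section Scatter

variable {ι : Type*} [Fintype ι]

lemma scatter_add_const (x : ι → ℝ) (c : ℝ) : scatter (fun i => x i + c) = scatter x := by
  simp only [scatter, add_sq, Finset.sum_add_distrib, ← Finset.sum_mul, ← Finset.mul_sum,
    Finset.sum_const, Finset.card_univ, nsmul_eq_mul]
  ring

lemma scatter_const_mul (a : ℝ) (x : ι → ℝ) : scatter (fun i => a * x i) = a ^ 2 * scatter x := by
  simp only [scatter, mul_pow, ← Finset.mul_sum]
  ring

lemma scatter_sub_proj [Nonempty ι] (x s : ι → ℝ) (hs : ∑ i, s i = 0)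
    (hss : ∀ i, s i * s i = 1) :
    scatter (fun i => x i - s i * ((∑ j, s j * x j) / Fintype.card ι)) =
      scatter x - (∑ j, s j * x j) ^ 2 := by
  have hn : (Fintype.card ι : ℝ) ≠ 0 := by positivity
  set P := ∑ j, s j * x j
  have hterm : ∀ i, (x i - s i * (P / Fintype.card ι)) ^ 2
      = x i ^ 2 - 2 * (P / Fintype.card ι) * (s i * x i) + (P / Fintype.card ι) ^ 2 := by
    intro i
    linear_combination (P / Fintype.card ι) ^ 2 * hss i
  simp only [scatter, hterm, Finset.sum_add_distrib, Finset.sum_sub_distrib, ← Finset.mul_sum,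
    ← Finset.sum_mul, hs, Finset.sum_const, Finset.card_univ, nsmul_eq_mul]
  field_simp
  ring

end Scatter

lemma sum_crd_mul_sq_sum_spin_mul {N : ℕ} (hEven : 2 ∣ N) (x : Fin N → ℝ) :
    ∑ w, crd N w * (∑ i, spin w i * x i) ^ 2 = scatter x / ((N : ℝ) - 1) := by
  have hN1 : (N : ℝ) - 1 ≠ 0 := by
    rw [sub_ne_zero, Ne, ← Nat.cast_one, Nat.cast_inj]
    rintro rfl
    norm_num at hEven
  set S := ∑ i, x i
  calc ∑ w, crd N w * (∑ i, spin w i * x i) ^ 2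
      = ∑ i, ∑ j, x i * x j * ∑ w, crd N w * (spin w i * spin w j) := by
        have hexpand : ∀ w, crd N w * (∑ i, spin w i * x i) ^ 2
            = ∑ i, ∑ j, x i * x j * (crd N w * (spin w i * spin w j)) := fun w => by
          rw [sq, Finset.sum_mul_sum, Finset.mul_sum]
          exact Finset.sum_congr rfl fun i _ => by
            rw [Finset.mul_sum]
            exact Finset.sum_congr rfl fun j _ => by ring
        rw [Finset.sum_congr rfl fun w _ => hexpand w, Finset.sum_comm]
        refine Finset.sum_congr rfl fun i _ => ?_
        rw [Finset.sum_comm]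
        simp only [Finset.mul_sum]
    _ = ∑ i, x i * (x i - (S - x i) / ((N : ℝ) - 1)) := by
        refine Finset.sum_congr rfl fun i _ => ?_
        have hoff : ∀ j ∈ univ.erase i,
            x i * x j * ∑ w, crd N w * (spin w i * spin w j) = x i * x j * (-1 / ((N : ℝ) - 1)) :=
          fun j hj => by rw [sum_crd_mul_spin_mul_spin_of_ne hEven (Finset.ne_of_mem_erase hj).symm]
        rw [← Finset.add_sum_erase _ _ (Finset.mem_univ i), Finset.sum_congr rfl hoff]
        simp only [spin_mul_self, mul_one, sum_crd, ← Finset.sum_mul, ← Finset.mul_sum,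
          Finset.sum_erase_eq_sub (Finset.mem_univ i)]
        ring
    _ = scatter x / ((N : ℝ) - 1) := by
        have hterm : ∀ i, x i * (x i - (S - x i) / ((N : ℝ) - 1))
            = (N * x i ^ 2 - S * x i) / ((N : ℝ) - 1) := fun i => by
          field_simp
          ring
        rw [Finset.sum_congr rfl fun i _ => hterm i, ← Finset.sum_div, Finset.sum_sub_distrib,
          ← Finset.mul_sum, ← Finset.mul_sum, scatter, Fintype.card_fin, sq S]

lemma psiHalf_crd {N : ℕ} (hEven : 2 ∣ N) (x : Fin N → ℝ) :
    psiHalf N (crd N) x = 4 / (N : ℝ) ^ 2 * (scatter x / ((N : ℝ) - 1)) := by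
  rw [psiHalf, ← sum_crd_mul_sq_sum_spin_mul hEven, Finset.mul_sum]
  refine Finset.sum_congr rfl fun w _ => ?_
  rw [sum_ite_sub_sum_ite_eq_sum_spin_mul]
  ring

section Homogeneous

variable {N : ℕ} {Y1 Y0 : Fin N → ℝ} {τ : ℝ} {w : Fin N → Bool}

lemma sum_treated_yObs (hEven : 2 ∣ N) (hY : ∀ i, Y1 i = Y0 i + τ)
    (hw : (Tset N w).card = N / 2) :
    ∑ i, (if w i then yObs N Y1 Y0 w i else 0) =
      (∑ i, if w i then Y0 i else 0) + (N : ℝ) / 2 * τ := by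
  have hsplit : ∀ i, (if w i then yObs N Y1 Y0 w i else 0)
      = (if w i then Y0 i else 0) + τ * (if w i then 1 else 0) := fun i => by
    simp only [yObs, hY]
    split_ifs <;> ring
  rw [Finset.sum_congr rfl fun i _ => hsplit i, Finset.sum_add_distrib, ← Finset.mul_sum,
    ← card_Tset_eq_sum_ite, hw, Nat.cast_div hEven two_ne_zero, Nat.cast_ofNat, mul_comm τ]

lemma sum_control_yObs :
    ∑ i, (if w i then 0 else yObs N Y1 Y0 w i) = ∑ i, if w i then 0 else Y0 i :=
  Finset.sum_congr rfl fun i _ => by simp only [yObs]; split_ifs <;> rfl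

lemma tauDM_sub_eq (hN : N ≠ 0) (hEven : 2 ∣ N) (hY : ∀ i, Y1 i = Y0 i + τ)
    (hw : (Tset N w).card = N / 2) :
    tauDM N Y1 Y0 w - τ = 2 / (N : ℝ) * ∑ i, spin w i * Y0 i := by
  rw [tauDM, sum_treated_yObs hEven hY hw, sum_control_yObs, add_sub_right_comm,
    sum_ite_sub_sum_ite_eq_sum_spin_mul]
  field_simp
  ring

lemma jackknife_imputation_eq (hN : 2 < N) (hEven : 2 ∣ N) (hY : ∀ i, Y1 i = Y0 i + τ)
    (hw : (Tset N w).card = N / 2) :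
    ∃ G : ℝ, ∀ i, yObs N Y1 Y0 w i
        + (1 / 2 - (if w i then (1 : ℝ) else 0)) * thetaJackCRD N Y1 Y0 i w =
      ((N : ℝ) - 1) / ((N : ℝ) - 2) * (Y0 i - spin w i * ((∑ j, spin w j * Y0 j) / N)) + G := by
  have hN' : (2 : ℝ) < N := by exact_mod_cast hN
  have h0 : (N : ℝ) ≠ 0 := by positivity
  have h2 : (N : ℝ) - 2 ≠ 0 := by linarith
  have h2' : (N : ℝ) / 2 - 1 ≠ 0 := by linarith
  set S1 := ∑ i, if w i then Y0 i else 0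
  set S0 := ∑ i, if w i then 0 else Y0 i
  have hP : ∑ j, spin w j * Y0 j = S1 - S0 := (sum_ite_sub_sum_ite_eq_sum_spin_mul w Y0).symm
  refine ⟨τ / 2 + (S1 + S0) / (2 * N) - (S1 + S0) / (2 * ((N : ℝ) - 2)), fun i => ?_⟩
  rw [thetaJackCRD, Finset.sum_erase_eq_sub (Finset.mem_univ i),
    Finset.sum_erase_eq_sub (Finset.mem_univ i), sum_treated_yObs hEven hY hw, sum_control_yObs,
    hP]
  by_cases hwi : w i
  · simp only [hwi, spin, yObs, if_true, hY]
    field_simp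
    ring
  · simp only [hwi, spin, yObs, Bool.false_eq_true, if_false]
    field_simp
    ring

lemma scatter_jackknife_imputation (hN : 2 < N) (hEven : 2 ∣ N) (hY : ∀ i, Y1 i = Y0 i + τ)
    (hw : (Tset N w).card = N / 2) :
    scatter (fun i => yObs N Y1 Y0 w i
        + (1 / 2 - (if w i then (1 : ℝ) else 0)) * thetaJackCRD N Y1 Y0 i w) =
      (((N : ℝ) - 1) / ((N : ℝ) - 2)) ^ 2 * (scatter Y0 - (∑ i, spin w i * Y0 i) ^ 2) := by
  obtain ⟨G, hG⟩ := jackknife_imputation_eq hN hEven hY hw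
  have : NeZero N := ⟨by omega⟩
  have hproj := scatter_sub_proj Y0 (spin w) (sum_spin_eq_zero hEven hw) (spin_mul_self w)
  rw [Fintype.card_fin] at hproj
  simp only [hG]
  rw [scatter_add_const, scatter_const_mul, hproj]

end Homogeneous

lemma varDM_crd {N : ℕ} {Y1 Y0 : Fin N → ℝ} (hN : N ≠ 0) (hEven : 2 ∣ N)
    (hY : ∀ i, Y1 i = Y0 i + tauATE N Y1 Y0) :
    varDM N (crd N) Y1 Y0 = 4 / (N : ℝ) ^ 2 * (scatter Y0 / ((N : ℝ) - 1)) := by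
  rw [varDM, expct, ← sum_crd_mul_sq_sum_spin_mul hEven, Finset.mul_sum]
  refine sum_crd_mul_congr (g := fun w => 4 / (N : ℝ) ^ 2 * (∑ i, spin w i * Y0 i) ^ 2)
    (fun w hw => ?_) |>.trans (Finset.sum_congr rfl fun w _ => by ring)
  rw [tauDM_sub_eq hN hEven hY hw]
  ring

/-- Theorem 4: under the CRD with equal group sizes and homogeneous treatment
effects, `E[V̂_Jack(W)] = ((N−1)/(N−2))·Var(τ̂)`. -/
theorem jackknife_bias_crd
    (N : ℕ) (hN : 4 ≤ N) (hEven : 2 ∣ N)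
    (Y1 Y0 : Fin N → ℝ)
    (hhom : ∀ i, Y1 i - Y0 i = tauATE N Y1 Y0) :
    expct N (crd N) (VJack N Y1 Y0)
      = (((N : ℝ) - 1) / ((N : ℝ) - 2)) * varDM N (crd N) Y1 Y0 := by
  have hY : ∀ i, Y1 i = Y0 i + tauATE N Y1 Y0 := fun i => by linarith [hhom i]
  set K := 4 / (N : ℝ) ^ 2 * (((N : ℝ) - 1) / ((N : ℝ) - 2)) ^ 2 / ((N : ℝ) - 1) with hK
  have hVJack : ∀ w, (Tset N w).card = N / 2 →
      VJack N Y1 Y0 w = K * (scatter Y0 - (∑ i, spin w i * Y0 i) ^ 2) := fun w hw => by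
    rw [VJack, psiHalf_crd hEven, scatter_jackknife_imputation (by omega) hEven hY hw]
    ring
  calc expct N (crd N) (VJack N Y1 Y0)
      = ∑ w, crd N w * (K * (scatter Y0 - (∑ i, spin w i * Y0 i) ^ 2)) :=
        sum_crd_mul_congr hVJack
    _ = K * (scatter Y0 - scatter Y0 / ((N : ℝ) - 1)) := by
        simp only [mul_sub, mul_left_comm (crd N _), Finset.sum_sub_distrib, ← Finset.mul_sum,
          ← Finset.sum_mul, sum_crd, sum_crd_mul_sq_sum_spin_mul hEven]
        ring
    _ = _ := by
        have hN' : (4 : ℝ) ≤ N := by exact_mod_cast hN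
        have h1 : (N : ℝ) - 1 ≠ 0 := by linarith
        have h2 : (N : ℝ) - 2 ≠ 0 := by linarith
        rw [hK, varDM_crd (by omega) hEven hY]
        field_simp
        ring
end
end

section
/- Let p be a design on N units, fix a unit i with 0 < π_i < 1, and let α, ζ, α̃, ζ̃ ∈ ℝ be deterministic constants. Define the linear estimator c̃_i(w) = w_i·(α·y_i(w) + ζ) + (1 − w_i)·(α̃·y_i(w) + ζ̃). Then E[c̃_i(W)] = c_i holds for every choice of the potential outcomes Y_i(1), Y_i(0) ∈ ℝ if and only if α = (1 − π_i)/π_i, α̃ = π_i/(1 − π_i), and π_i·ζ = −(1 − π_i)·ζ̃, where c_i = (1 − π_i)·Y_i(1) + π_i·Y_i(0). -/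
open Finset

noncomputable section

lemma expct_ite (N : ℕ) (p : (Fin N → Bool) → ℝ)
    (hsum : ∑ w : Fin N → Bool, p w = 1) (i : Fin N) (A B : ℝ) :
    expct N p (fun w => if w i then A else B)
      = piS N p i * A + (1 - piS N p i) * B := by
  have h1 : (1 : ℝ) - ∑ w : Fin N → Bool, (if w i then p w else 0)
      = ∑ w : Fin N → Bool, if w i then 0 else p w := by
    rw [← hsum, ← Finset.sum_sub_distrib]
    apply Finset.sum_congr rfl
    intro w _
    by_cases h : w i <;> simp [h]
  rw [expct, piS, h1, Finset.sum_mul, Finset.sum_mul, ← Finset.sum_add_distrib]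
  apply Finset.sum_congr rfl
  intro w _
  by_cases h : w i <;> simp [h, mul_comm]

/-- Proposition 10 (characterization of linear unbiased imputation estimators):
the linear estimator `c̃_i(w) = w_i·(α·y_i(w) + ζ) + (1 − w_i)·(α̃·y_i(w) + ζ̃)` is
unbiased for `c_i = (1 − π_i)·Y_i(1) + π_i·Y_i(0)` for every choice of potential
outcomes iff `α = (1 − π_i)/π_i`, `α̃ = π_i/(1 − π_i)`, and `π_i·ζ = −(1 − π_i)·ζ̃`. -/
theorem linear_unbiased_characterization
    (N : ℕ)
    (p : (Fin N → Bool) → ℝ) (hp : ∀ w, 0 ≤ p w)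
    (hsum : ∑ w : Fin N → Bool, p w = 1)
    (i : Fin N) (hpi : 0 < piS N p i ∧ piS N p i < 1)
    (α ζ α' ζ' : ℝ) :
    (∀ Y1 Y0 : Fin N → ℝ,
        expct N p (fun w =>
          if w i then α * yObs N Y1 Y0 w i + ζ else α' * yObs N Y1 Y0 w i + ζ')
          = (1 - piS N p i) * Y1 i + piS N p i * Y0 i)
      ↔ (α = (1 - piS N p i) / piS N p i ∧
          α' = piS N p i / (1 - piS N p i) ∧
          piS N p i * ζ = -((1 - piS N p i) * ζ')) := by
  set π := piS N p i with hπ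
  have hπ0 : π ≠ 0 := ne_of_gt hpi.1
  have hπ1 : 1 - π ≠ 0 := by linarith [hpi.2]
  have key : ∀ Y1 Y0 : Fin N → ℝ,
      expct N p (fun w =>
        if w i then α * yObs N Y1 Y0 w i + ζ else α' * yObs N Y1 Y0 w i + ζ')
        = π * (α * Y1 i + ζ) + (1 - π) * (α' * Y0 i + ζ') := by
    intro Y1 Y0
    have := expct_ite N p hsum i (α * Y1 i + ζ) (α' * Y0 i + ζ')
    rw [← this]
    apply Finset.sum_congr rfl
    intro w _
    by_cases h : w i <;> simp [h, yObs]
  constructor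
  · intro H
    have h00 := H (fun _ => 0) (fun _ => 0)
    have h10 := H (fun _ => 1) (fun _ => 0)
    have h01 := H (fun _ => 0) (fun _ => 1)
    rw [key] at h00 h10 h01
    have hzz : π * ζ + (1 - π) * ζ' = 0 := by linarith
    have hα : π * α = 1 - π := by nlinarith
    have hα' : (1 - π) * α' = π := by nlinarith
    refine ⟨?_, ?_, by linarith⟩
    · field_simp
      linarith
    · field_simp
      linarith
  · rintro ⟨hA, hA', hz⟩ Y1 Y0
    rw [key, hA, hA']
    field_simp
    ring_nf
    nlinarith [hz]
end
end

section
/- Let p be a design on N ≥ 2 units satisfying positivity, fix a unit i, and assume that for every j ≠ i and every u ∈ {0,1}, 0 < Pr(W_j = 1 | W_i = u) < 1. For an assignment w let π̃_j(w) = Pr(W_j = 1 | W_i = w_i) and define the jackknifed Horvitz–Thompson estimator τ̂_{(−i)}(w) = (1/(N−1))·Σ_{j ≠ i} [ w_j·y_j(w)/π̃_j(w) − (1 − w_j)·y_j(w)/(1 − π̃_j(w)) ]. Then E[τ̂_{(−i)}(W) | W_i = 1] = E[τ̂_{(−i)}(W) | W_i = 0] = (1/(N−1))·Σ_{j ≠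 i} (Y_j(1) − Y_j(0)), and consequently the linear imputation estimator ĉ_i built from γ_i = τ̂_{(−i)} satisfies E[ĉ_i(W)] = c_i = (1 − π_i)·Y_i(1) + π_i·Y_i(0). -/
open Finset

noncomputable section

/-- The jackknifed Horvitz–Thompson estimator `τ̂_{(−i)}(w)` which leaves out unit `i`
and reweights according to `π̃_j(w) = Pr(W_j = 1 | W_i = w_i)`. -/
def tauJack (N : ℕ) (p : (Fin N → Bool) → ℝ) (Y1 Y0 : Fin N → ℝ) (i : Fin N)
    (w : Fin N → Bool) : ℝ :=
  (1 / ((N : ℝ) - 1)) * ∑ j ∈ univ.erase i,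
    ((if w j then yObs N Y1 Y0 w j / condPi N p i (w i) j else 0)
      - (if w j then 0 else yObs N Y1 Y0 w j / (1 - condPi N p i (w i) j)))

/-- Proposition A2: the jackknifed Horvitz–Thompson estimator `τ̂_{(−i)}` has the
same conditional expectation given `W_i = 1` and `W_i = 0`, namely the leave-one-out
average treatment effect, and the resulting linear imputation estimator is unbiased
for `c_i`. -/
theorem jackknife_tau_unbiased
    (N : ℕ) (hN : 2 ≤ N)
    (p : (Fin N → Bool) → ℝ) (hp : ∀ w, 0 ≤ p w)
    (hsum : ∑ w : Fin N → Bool, p w = 1)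
    (hpos : ∀ i, 0 < piS N p i ∧ piS N p i < 1)
    (i : Fin N)
    (hcond : ∀ j ∈ univ.erase i, ∀ u : Bool,
      0 < condPi N p i u j ∧ condPi N p i u j < 1)
    (Y1 Y0 : Fin N → ℝ) :
    condE N p i true (tauJack N p Y1 Y0 i)
        = (1 / ((N : ℝ) - 1)) * ∑ j ∈ univ.erase i, (Y1 j - Y0 j) ∧
      condE N p i false (tauJack N p Y1 Y0 i)
        = (1 / ((N : ℝ) - 1)) * ∑ j ∈ univ.erase i, (Y1 j - Y0 j) ∧
      expct N p (cHatLin N p Y1 Y0 i (tauJack N p Y1 Y0 i))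
        = (1 - piS N p i) * Y1 i + piS N p i * Y0 i := by
    classical
  obtain ⟨hπ0, hπ1⟩ := hpos i
  -- Denominators
  have hDt : (∑ w : Fin N → Bool, if w i = true then p w else 0) = piS N p i := rfl
  have hDf : (∑ w : Fin N → Bool, if w i = false then p w else 0) = 1 - piS N p i := by
    have h1 : ∀ w : Fin N → Bool, (if w i = false then p w else 0)
        = p w - (if w i = true then p w else 0) := by
      intro w; cases h : w i <;> simp [h]
    rw [Finset.sum_congr rfl fun w _ => h1 w, Finset.sum_sub_distrib, hsum, hDt]
  have hDpos : ∀ u : Bool, 0 < (∑ w : Fin N → Bool, if w i = u then p w else 0) := by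
    intro u; cases u
    · rw [hDf]; linarith
    · rw [hDt]; exact hπ0
  -- Key lemma
  have hkey : ∀ u : Bool,
      (∑ w : Fin N → Bool, if w i = u then p w * tauJack N p Y1 Y0 i w else 0)
      = (∑ w : Fin N → Bool, if w i = u then p w else 0)
        * ((1 / ((N : ℝ) - 1)) * ∑ j ∈ univ.erase i, (Y1 j - Y0 j)) := by
    intro u
    have hD := hDpos u
    have step1 : ∀ w : Fin N → Bool,
        (if w i = u then p w * tauJack N p Y1 Y0 i w else 0)
        = (1 / ((N : ℝ) - 1)) * ∑ j ∈ univ.erase i,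
            ((if w i = u ∧ w j = true then p w * (Y1 j / condPi N p i u j) else 0)
             - (if w i = u ∧ w j = false then p w * (Y0 j / (1 - condPi N p i u j)) else 0)) := by
      intro w
      by_cases hwi : w i = u
      · rw [if_pos hwi]
        rw [tauJack, hwi, mul_left_comm, Finset.mul_sum]
        refine congrArg _ (Finset.sum_congr rfl fun j hj => ?_)
        cases hwj : w j <;> simp [yObs, hwj, hwi] <;> ring
      · simp [hwi]
    calc (∑ w : Fin N → Bool, if w i = u then p w * tauJack N p Y1 Y0 i w else 0)
        = ∑ w : Fin N → Bool, (1 / ((N : ℝ) - 1)) * ∑ j ∈ univ.erase i,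
            ((if w i = u ∧ w j = true then p w * (Y1 j / condPi N p i u j) else 0)
             - (if w i = u ∧ w j = false then p w * (Y0 j / (1 - condPi N p i u j)) else 0)) :=
          Finset.sum_congr rfl fun w _ => step1 w
      _ = (1 / ((N : ℝ) - 1)) * ∑ w : Fin N → Bool, ∑ j ∈ univ.erase i,
            ((if w i = u ∧ w j = true then p w * (Y1 j / condPi N p i u j) else 0)
             - (if w i = u ∧ w j = false then p w * (Y0 j / (1 - condPi N p i u j)) else 0)) := by
          rw [← Finset.mul_sum]
      _ = (1 / ((N : ℝ) - 1)) * ∑ j ∈ univ.erase i, ∑ w : Fin N → Bool,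
            ((if w i = u ∧ w j = true then p w * (Y1 j / condPi N p i u j) else 0)
             - (if w i = u ∧ w j = false then p w * (Y0 j / (1 - condPi N p i u j)) else 0)) := by
          rw [Finset.sum_comm]
      _ = (1 / ((N : ℝ) - 1)) * ∑ j ∈ univ.erase i,
            (∑ w : Fin N → Bool, if w i = u then p w else 0) * (Y1 j - Y0 j) := by
          refine congrArg _ (Finset.sum_congr rfl fun j hj => ?_)
          set D := ∑ w : Fin N → Bool, if w i = u then p w else 0 with hDdef
          set A := ∑ w : Fin N → Bool, if w i = u ∧ w j = true then p w else 0 with hAdef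
          set B := ∑ w : Fin N → Bool, if w i = u ∧ w j = false then p w else 0 with hBdef
          have hπt : condPi N p i u j = A / D := rfl
          have hAB : A + B = D := by
            rw [hAdef, hBdef, hDdef, ← Finset.sum_add_distrib]
            refine Finset.sum_congr rfl fun w _ => ?_
            by_cases h1 : w i = u <;> cases h2 : w j <;> simp [h1, h2]
          obtain ⟨hc0, hc1⟩ := hcond j hj u
          rw [hπt] at hc0 hc1
          have hA : 0 < A := by
            have := mul_pos hc0 hD
            rwa [div_mul_cancel₀ _ hD.ne'] at this
          have hB : 0 < B := by
            have h2 : A / D < 1 := hc1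
            have : A < D := (div_lt_one hD).1 h2
            linarith
          have e1 : ∀ w : Fin N → Bool,
              (if w i = u ∧ w j = true then p w * (Y1 j / condPi N p i u j) else 0)
              = (if w i = u ∧ w j = true then p w else 0) * (Y1 j / condPi N p i u j) := by
            intro w; split <;> simp
          have e2 : ∀ w : Fin N → Bool,
              (if w i = u ∧ w j = false then p w * (Y0 j / (1 - condPi N p i u j)) else 0)
              = (if w i = u ∧ w j = false then p w else 0) * (Y0 j / (1 - condPi N p i u j)) := by
            intro w; split <;> simp
          rw [Finset.sum_sub_distrib,
            Finset.sum_congr rfl fun w _ => e1 w,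
            Finset.sum_congr rfl fun w _ => e2 w,
            ← Finset.sum_mul, ← Finset.sum_mul, ← hAdef, ← hBdef, hπt]
          have h1mπ : 1 - A / D = B / D := by
            field_simp
            linarith
          rw [h1mπ]
          have hA' : A ≠ 0 := hA.ne'
          have hB' : B ≠ 0 := hB.ne'
          have hD' : D ≠ 0 := hD.ne'
          have g1 : A * (Y1 j / (A / D)) = Y1 j * D := by field_simp
          have g2 : B * (Y0 j / (B / D)) = Y0 j * D := by field_simp
          rw [g1, g2]
          ring
      _ = (∑ w : Fin N → Bool, if w i = u then p w else 0)
            * ((1 / ((N : ℝ) - 1)) * ∑ j ∈ univ.erase i, (Y1 j - Y0 j)) := by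
          rw [← Finset.mul_sum]; ring
  have hcE : ∀ u : Bool, condE N p i u (tauJack N p Y1 Y0 i)
      = (1 / ((N : ℝ) - 1)) * ∑ j ∈ univ.erase i, (Y1 j - Y0 j) := by
    intro u
    show (∑ w : Fin N → Bool, if w i = u then p w * tauJack N p Y1 Y0 i w else 0) /
        (∑ w : Fin N → Bool, if w i = u then p w else 0) = _
    rw [hkey u]
    exact mul_div_cancel_left₀ _ (hDpos u).ne'
  refine ⟨hcE true, hcE false, ?_⟩
  -- unbiasedness
  have hsplit : ∀ w : Fin N → Bool,
      p w * cHatLin N p Y1 Y0 i (tauJack N p Y1 Y0 i) w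
      = (if w i = true then p w else 0) * (((1 - piS N p i) / piS N p i) * Y1 i)
        - (if w i = true then p w * tauJack N p Y1 Y0 i w else 0) * (1 - piS N p i)
        + (if w i = false then p w else 0) * ((piS N p i / (1 - piS N p i)) * Y0 i)
        + (if w i = false then p w * tauJack N p Y1 Y0 i w else 0) * piS N p i := by
    intro w; cases h : w i <;> simp [cHatLin, yObs, h] <;> ring
  have hπ1' : (1 : ℝ) - piS N p i ≠ 0 := by linarith
  calc expct N p (cHatLin N p Y1 Y0 i (tauJack N p Y1 Y0 i))
      = ∑ w : Fin N → Bool,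
        ((if w i = true then p w else 0) * (((1 - piS N p i) / piS N p i) * Y1 i)
        - (if w i = true then p w * tauJack N p Y1 Y0 i w else 0) * (1 - piS N p i)
        + (if w i = false then p w else 0) * ((piS N p i / (1 - piS N p i)) * Y0 i)
        + (if w i = false then p w * tauJack N p Y1 Y0 i w else 0) * piS N p i) :=
        Finset.sum_congr rfl fun w _ => hsplit w
    _ = (∑ w : Fin N → Bool, if w i = true then p w else 0) * (((1 - piS N p i) / piS N p i) * Y1 i)
        - (∑ w : Fin N → Bool, if w i = true then p w * tauJack N p Y1 Y0 i w else 0) * (1 - piS N p i)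
        + (∑ w : Fin N → Bool, if w i = false then p w else 0) * ((piS N p i / (1 - piS N p i)) * Y0 i)
        + (∑ w : Fin N → Bool, if w i = false then p w * tauJack N p Y1 Y0 i w else 0) * piS N p i := by
        simp only [Finset.sum_add_distrib, Finset.sum_sub_distrib, Finset.sum_mul]
    _ = (1 - piS N p i) * Y1 i + piS N p i * Y0 i := by
        rw [hkey true, hkey false, hDt, hDf]
        field_simp
        ring
end
end
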